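/- arXiv:2403.12576 — 5 statements merged into one kernel-verified Lean document; each statement's English description precedes it below -/
import Mathlib

section
/- Let m ≥ 1 be an integer and let f : [0,∞) → ℂ be a continuous function. Then f belongs to 𝓕_w^m if and only if 𝓛^m f belongs to 𝓡_w. -/
open MeasureTheory Real Set

noncomputable section

/-- The class `𝓡_w^c`: continuous functions on `[0,∞)` whose integral of the modulus up to `n`
is `≤ c₁ (n+1)^c e^{n/2}` for every integer `n ≥ 1`. -/
def memRwC (c : ℝ) (f : ℝ → ℂ) : Prop :=
  ContinuousOn f (Set.Ici 0) ∧
  ∃ c₁ : ℝ, 0 < c₁ ∧ ∀ n : ℕ, 1 ≤ n →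
    (∫ s in (0:ℝ)..(n:ℝ), ‖f s‖) ≤ c₁ * ((n:ℝ) + 1) ^ c * Real.exp ((n:ℝ) / 2)

/-- The class `𝓡_w = ⋃_{c ≥ 0} 𝓡_w^c`. -/
def memRw (f : ℝ → ℂ) : Prop := ∃ c : ℝ, 0 ≤ c ∧ memRwC c f

/-- The class `𝓕_w^m` of weak Friedman–Ramanujan functions with polynomial part of
degree `< m`. -/
def memFw (m : ℕ) (f : ℝ → ℂ) : Prop :=
  ContinuousOn f (Set.Ici 0) ∧
  ∃ p : Polynomial ℂ, p.degree < (m : ℕ) ∧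
    memRw (fun ℓ : ℝ => f ℓ - p.eval (ℓ : ℂ) * Complex.exp ℓ)

/-- The primitive operator `𝒫 f (x) = ∫₀ˣ f(t) dt`. -/
def Pop (f : ℝ → ℂ) : ℝ → ℂ := fun x => ∫ t in (0:ℝ)..x, f t

/-- The operator `𝓛 = Id − 𝒫`. -/
def Lop (f : ℝ → ℂ) : ℝ → ℂ := fun x => f x - Pop f x

/-!
Both directions go one power of `𝓛` at a time: for continuous `f`,
`f ∈ 𝓕_w^{m+1} ↔ 𝓛 f ∈ 𝓕_w^m`. The operator `𝓛` preserves `𝓡_w` (`𝒫` costs one power of `n`),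
and on principal terms `𝓛 ((r + r') eᵗ) = r' eᵗ + r(0)`; since every polynomial `p` is `r + r'`
with `deg r = deg p`, this lowers the degree by one. Conversely, if `𝓛 h ∈ 𝓡_w` then
`h = 𝓛 h + eˣ ∫₀ˣ e^{-t} 𝓛 h`; integrating by parts, the tail of that integral is
`O((x+1)^k e^{-x/2})`, so `h - A eˣ ∈ 𝓡_w` for `A = ∫₀^∞ e^{-t} 𝓛 h`.
The values of `f` on `(-∞, 0)` play no role, so `f` may first be extended to a continuous function.
-/

open Filter Topology Polynomial intervalIntegral
open scoped Complex

lemma intervalIntegrable_norm_of_continuousOn_Ici {f : ℝ → ℂ} (hf : ContinuousOn f (Ici 0))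
    {x : ℝ} (hx : 0 ≤ x) : IntervalIntegrable (fun s => ‖f s‖) volume 0 x :=
  (hf.norm.mono Icc_subset_Ici_self).intervalIntegrable_of_Icc hx

lemma integral_norm_le_of_le {f : ℝ → ℂ} (hf : ContinuousOn f (Ici 0)) {x y : ℝ}
    (hx : 0 ≤ x) (hxy : x ≤ y) :
    ∫ s in (0:ℝ)..x, ‖f s‖ ≤ ∫ s in (0:ℝ)..y, ‖f s‖ :=
  integral_mono_interval le_rfl hx hxy (.of_forall fun _ => norm_nonneg _)
    (intervalIntegrable_norm_of_continuousOn_Ici hf (hx.trans hxy))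

lemma memRw_iff {f : ℝ → ℂ} :
    memRw f ↔ ContinuousOn f (Ici 0) ∧ ∃ (k : ℕ) (C : ℝ), 0 ≤ C ∧ ∀ x, 0 ≤ x →
      ∫ s in (0:ℝ)..x, ‖f s‖ ≤ C * (x + 1) ^ k * rexp (x / 2) := by
  constructor
  · rintro ⟨c, -, hcont, c₁, hc₁, hb⟩
    refine ⟨hcont, ⌈c⌉₊, c₁ * 2 ^ ⌈c⌉₊ * rexp (1 / 2), by positivity, fun x hx => ?_⟩
    set n : ℕ := max 1 ⌈x⌉₊
    have hxn : x ≤ n := (Nat.le_ceil x).trans (by exact_mod_cast le_max_right 1 ⌈x⌉₊)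
    have hnx : (n : ℝ) ≤ x + 1 := by
      rw [Nat.cast_max, Nat.cast_one]
      exact max_le (by linarith) (Nat.ceil_lt_add_one hx).le
    calc ∫ s in (0:ℝ)..x, ‖f s‖ ≤ ∫ s in (0:ℝ)..n, ‖f s‖ := integral_norm_le_of_le hcont hx hxn
      _ ≤ c₁ * ((n : ℝ) + 1) ^ c * rexp (n / 2) := hb n (le_max_left _ _)
      _ ≤ c₁ * ((n : ℝ) + 1) ^ (⌈c⌉₊ : ℝ) * rexp ((x + 1) / 2) := by
        gcongr
        · linarith [n.cast_nonneg (α := ℝ)]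
        · exact Nat.le_ceil c
      _ ≤ c₁ * (2 * (x + 1)) ^ ⌈c⌉₊ * (rexp (1 / 2) * rexp (x / 2)) := by
        rw [Real.rpow_natCast, ← Real.exp_add, add_div, add_comm (x / 2)]
        gcongr
        linarith
      _ = c₁ * 2 ^ ⌈c⌉₊ * rexp (1 / 2) * (x + 1) ^ ⌈c⌉₊ * rexp (x / 2) := by rw [mul_pow]; ring
  · rintro ⟨hcont, k, C, hC, hb⟩
    refine ⟨k, k.cast_nonneg, hcont, C + 1, by positivity, fun n _ => ?_⟩
    rw [Real.rpow_natCast]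
    exact (hb n n.cast_nonneg).trans (by gcongr; linarith)

lemma memRw_of_norm_le {f g : ℝ → ℂ} (hg : ContinuousOn g (Ici 0))
    (hgf : ∀ x, 0 ≤ x → ‖g x‖ ≤ ‖f x‖) (hf : memRw f) : memRw g := by
  obtain ⟨c, hc, hfc, c₁, hc₁, hb⟩ := hf
  refine ⟨c, hc, hg, c₁, hc₁, fun n hn => (integral_mono_on n.cast_nonneg
    (intervalIntegrable_norm_of_continuousOn_Ici hg n.cast_nonneg)
    (intervalIntegrable_norm_of_continuousOn_Ici hfc n.cast_nonneg)
    fun x hx => hgf x hx.1).trans (hb n hn)⟩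

lemma memRw_congr {f g : ℝ → ℂ} (h : EqOn f g (Ici 0)) : memRw f ↔ memRw g :=
  have key {f g : ℝ → ℂ} (h : EqOn f g (Ici 0)) (hf : memRw f) : memRw g :=
    memRw_of_norm_le ((memRw_iff.1 hf).1.congr h.symm) (fun x hx => by rw [h hx]) hf
  ⟨key h, key h.symm⟩

lemma memRw_neg {f : ℝ → ℂ} (hf : memRw f) : memRw (fun x => -f x) :=
  memRw_of_norm_le (memRw_iff.1 hf).1.neg (fun x _ => (norm_neg (f x)).le) hf

lemma memRw_add {f g : ℝ → ℂ} (hf : memRw f) (hg : memRw g) : memRw (fun x => f x + g x) := by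
  obtain ⟨hfc, k₁, C₁, hC₁, hb₁⟩ := memRw_iff.1 hf
  obtain ⟨hgc, k₂, C₂, hC₂, hb₂⟩ := memRw_iff.1 hg
  refine memRw_iff.2 ⟨hfc.add hgc, k₁ + k₂, C₁ + C₂, by positivity, fun x hx => ?_⟩
  have hx1 : 1 ≤ x + 1 := by linarith
  calc ∫ s in (0:ℝ)..x, ‖f s + g s‖
      ≤ ∫ s in (0:ℝ)..x, (‖f s‖ + ‖g s‖) :=
        integral_mono_on hx (intervalIntegrable_norm_of_continuousOn_Ici (hfc.add hgc) hx)
          ((intervalIntegrable_norm_of_continuousOn_Ici hfc hx).add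
            (intervalIntegrable_norm_of_continuousOn_Ici hgc hx)) fun s _ => norm_add_le _ _
    _ = (∫ s in (0:ℝ)..x, ‖f s‖) + ∫ s in (0:ℝ)..x, ‖g s‖ :=
        integral_add (intervalIntegrable_norm_of_continuousOn_Ici hfc hx)
          (intervalIntegrable_norm_of_continuousOn_Ici hgc hx)
    _ ≤ C₁ * (x + 1) ^ (k₁ + k₂) * rexp (x / 2) + C₂ * (x + 1) ^ (k₁ + k₂) * rexp (x / 2) := by
        gcongr
        · exact (hb₁ x hx).trans (by gcongr; omega)
        · exact (hb₂ x hx).trans (by gcongr; omega)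
    _ = (C₁ + C₂) * (x + 1) ^ (k₁ + k₂) * rexp (x / 2) := by ring

lemma memRw_sub {f g : ℝ → ℂ} (hf : memRw f) (hg : memRw g) : memRw (fun x => f x - g x) := by
  simpa only [sub_eq_add_neg] using memRw_add hf (memRw_neg hg)

lemma memRw_of_norm_le_weight {f : ℝ → ℂ} (hf : ContinuousOn f (Ici 0)) {k : ℕ} {C : ℝ}
    (hb : ∀ x, 0 ≤ x → ‖f x‖ ≤ C * (x + 1) ^ k * rexp (x / 2)) : memRw f := by
  have hC : 0 ≤ C := by simpa using (norm_nonneg _).trans (hb 0 le_rfl)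
  refine memRw_iff.2 ⟨hf, k, 2 * C, by positivity, fun x hx => ?_⟩
  have hexp : ∫ s in (0:ℝ)..x, rexp (s / 2) = 2 * (rexp (x / 2) - 1) := by
    simp [integral_comp_div (fun s => rexp s) two_ne_zero]
  calc ∫ s in (0:ℝ)..x, ‖f s‖ ≤ ∫ s in (0:ℝ)..x, C * (x + 1) ^ k * rexp (s / 2) :=
        integral_mono_on hx (intervalIntegrable_norm_of_continuousOn_Ici hf hx)
          (Continuous.intervalIntegrable (by fun_prop) _ _)
          fun s hs => (hb s hs.1).trans (by gcongr <;> linarith [hs.1, hs.2])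
    _ = C * (x + 1) ^ k * (2 * (rexp (x / 2) - 1)) := by
        rw [intervalIntegral.integral_const_mul, hexp]
    _ ≤ 2 * C * (x + 1) ^ k * rexp (x / 2) := by nlinarith [show 0 ≤ C * (x + 1) ^ k by positivity]

lemma memRw_const (a : ℂ) : memRw (fun _ => a) :=
  memRw_of_norm_le_weight continuousOn_const (k := 0) (C := ‖a‖) fun x hx => by
    simpa using le_mul_of_one_le_right (norm_nonneg a) (Real.one_le_exp (by positivity))

lemma continuous_Pop {f : ℝ → ℂ} (hf : Continuous f) : Continuous (Pop f) :=
  continuous_primitive (fun a b => hf.intervalIntegrable a b) 0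

lemma continuous_Lop {f : ℝ → ℂ} (hf : Continuous f) : Continuous (Lop f) :=
  hf.sub (continuous_Pop hf)

lemma Pop_eqOn {f g : ℝ → ℂ} (h : EqOn f g (Ici 0)) : EqOn (Pop f) (Pop g) (Ici 0) :=
  fun x hx => integral_congr fun t ht => h (by rw [uIcc_of_le hx] at ht; exact ht.1)

lemma Lop_eqOn {f g : ℝ → ℂ} (h : EqOn f g (Ici 0)) : EqOn (Lop f) (Lop g) (Ici 0) :=
  fun x hx => by simp only [Lop, h hx, Pop_eqOn h hx]

lemma Lop_iterate_eqOn {f g : ℝ → ℂ} (h : EqOn f g (Ici 0)) (m : ℕ) :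
    EqOn (Lop^[m] f) (Lop^[m] g) (Ici 0) := by
  induction m with
  | zero => exact h
  | succ m ih => simpa only [Function.iterate_succ_apply'] using Lop_eqOn ih

lemma memRw_Pop {f : ℝ → ℂ} (hf : Continuous f) (hfR : memRw f) : memRw (Pop f) := by
  obtain ⟨-, k, C, -, hb⟩ := memRw_iff.1 hfR
  exact memRw_of_norm_le_weight (continuous_Pop hf).continuousOn fun x hx =>
    (intervalIntegral.norm_integral_le_integral_norm hx).trans (hb x hx)

lemma memRw_Lop {f : ℝ → ℂ} (hf : Continuous f) (hfR : memRw f) : memRw (Lop f) :=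
  memRw_sub hfR (memRw_Pop hf hfR)

/-- Variation of constants: `(e^{-x} 𝒫 f)' = e^{-x} 𝓛 f`. -/
lemma Pop_eq_exp_mul_integral {f : ℝ → ℂ} (hf : Continuous f) (x : ℝ) :
    Pop f x = cexp x * ∫ t in (0:ℝ)..x, cexp (-t) * Lop f t := by
  have hderiv (t : ℝ) : HasDerivAt (fun s : ℝ => cexp (-s) * Pop f s) (cexp (-t) * Lop f t) t := by
    have hexp : HasDerivAt (fun s : ℝ => cexp (-s)) (-cexp (-t)) t := by
      simpa using (hasDerivAt_id (t : ℂ)).neg.cexp.comp_ofReal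
    have hPop : HasDerivAt (Pop f) (f t) t := (hf.integral_hasStrictDerivAt 0 t).hasDerivAt
    exact (hexp.mul hPop).congr_deriv (by rw [Lop]; ring)
  have hcont : Continuous fun t : ℝ => cexp (-t) * Lop f t := by
    have := continuous_Lop hf
    fun_prop
  rw [integral_eq_sub_of_hasDerivAt (fun t _ => hderiv t) (hcont.intervalIntegrable 0 x)]
  have hPop0 : Pop f 0 = 0 := integral_same
  rw [hPop0, mul_zero, sub_zero, ← mul_assoc, ← Complex.exp_add, add_neg_cancel, Complex.exp_zero,
    one_mul]

namespace Polynomial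

variable {R : Type*}

lemma exists_add_derivative_eq [CommRing R] (p : R[X]) : ∃ r : R[X], r + derivative r = p := by
  -- `sumIDeriv` inverts `1 - D`; conjugating by `X ↦ -X` turns it into an inverse of `1 + D`.
  set S := sumIDeriv (p.comp (-X))
  have hS : p.comp (-X) = S - derivative S := eq_sub_of_add_eq (sumIDeriv_eq_self_add _).symm
  refine ⟨S.comp (-X), ?_⟩
  calc S.comp (-X) + derivative (S.comp (-X)) = (S - derivative S).comp (-X) := by
        simp [derivative_comp, sub_eq_add_neg]
    _ = p := by simp [← hS, comp_assoc]

lemma degree_le_of_add_derivative_eq [Semiring R] {r p : R[X]} (h : r + derivative r = p) :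
    r.degree ≤ p.degree := by
  rcases eq_or_ne r 0 with rfl | hr
  · exact bot_le
  · rw [← h, degree_add_eq_left_of_degree_lt (degree_derivative_lt hr)]

lemma degree_derivative_lt_iff [Semiring R] [NoZeroDivisors R] [CharZero R] {p : R[X]} {m : ℕ} :
    (derivative p).degree < m ↔ p.degree < ↑(m + 1) := by
  simp only [degree_lt_iff_coeff_zero, coeff_derivative]
  constructor
  · intro h n hn
    obtain ⟨n, rfl⟩ : ∃ j, n = j + 1 := ⟨n - 1, by omega⟩
    simpa [Nat.cast_add_one_ne_zero] using h n (by omega)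
  · intro h n hn
    rw [h (n + 1) (by omega), zero_mul]

lemma exists_derivative_eq [Field R] [CharZero R] (q : R[X]) : ∃ Q : R[X], derivative Q = q := by
  induction q using Polynomial.induction_on' with
  | add p q hp hq =>
    obtain ⟨P, rfl⟩ := hp
    obtain ⟨Q, rfl⟩ := hq
    exact ⟨P + Q, derivative_add⟩
  | monomial n a =>
    refine ⟨monomial (n + 1) (a / (n + 1)), ?_⟩
    rw [derivative_monomial, Nat.add_sub_cancel]
    congr 1
    push_cast
    field_simp

end Polynomial

def polyExp (p : ℂ[X]) (t : ℝ) : ℂ := p.eval (t : ℂ) * cexp t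

lemma continuous_polyExp (p : ℂ[X]) : Continuous (polyExp p) := by
  unfold polyExp; fun_prop

lemma hasDerivAt_polyExp (p : ℂ[X]) (t : ℝ) :
    HasDerivAt (polyExp p) (polyExp (p + derivative p) t) t := by
  refine (((p.hasDerivAt (t : ℂ)).mul (Complex.hasDerivAt_exp t)).comp_ofReal).congr_deriv ?_
  simp only [polyExp, eval_add]
  ring

lemma Pop_polyExp_add_derivative (r : ℂ[X]) (x : ℝ) :
    Pop (polyExp (r + derivative r)) x = polyExp r x - r.eval 0 := by
  rw [Pop, integral_eq_sub_of_hasDerivAt (fun t _ => hasDerivAt_polyExp r t)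
    ((continuous_polyExp _).intervalIntegrable 0 x)]
  norm_num [polyExp]

lemma Lop_sub_polyExp_add_derivative {f : ℝ → ℂ} (hf : Continuous f) (r : ℂ[X]) (x : ℝ) :
    Lop (fun t => f t - polyExp (r + derivative r) t) x
      = Lop f x - polyExp (derivative r) x - r.eval 0 := by
  have hPop : Pop (fun t => f t - polyExp (r + derivative r) t) x
      = Pop f x - Pop (polyExp (r + derivative r)) x :=
    integral_sub (hf.intervalIntegrable 0 x) ((continuous_polyExp _).intervalIntegrable 0 x)
  rw [Lop, Lop, hPop, Pop_polyExp_add_derivative]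
  simp only [polyExp, eval_add]
  ring

lemma exists_add_one_pow_mul_exp_neg_le {b : ℝ} (hb : 0 < b) (k : ℕ) :
    ∃ M, 0 ≤ M ∧ ∀ x t, 0 ≤ x → x ≤ t →
      (t + 1) ^ k * rexp (-b * t) ≤ M * ((x + 1) ^ k * rexp (-b * x)) := by
  refine ⟨k.factorial / b ^ k * rexp b, by positivity, fun x t hx hxt => ?_⟩
  obtain ⟨s, hs, rfl⟩ : ∃ s, 0 ≤ s ∧ t = x + s := ⟨t - x, by linarith, by ring⟩
  have hpow : (x + s + 1) ^ k ≤ (x + 1) ^ k * (s + 1) ^ k := by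
    rw [← mul_pow]
    gcongr
    nlinarith
  have hsup : (s + 1) ^ k * rexp (-b * s) ≤ k.factorial / b ^ k * rexp b := by
    have h := Real.pow_div_factorial_le_exp (b * (s + 1)) (by positivity) k
    rw [mul_pow, div_le_iff₀ (by positivity)] at h
    rw [div_mul_eq_mul_div, le_div_iff₀ (by positivity)]
    calc (s + 1) ^ k * rexp (-b * s) * b ^ k = b ^ k * (s + 1) ^ k * rexp (-b * s) := by ring
      _ ≤ rexp (b * (s + 1)) * k.factorial * rexp (-b * s) := by gcongr
      _ = k.factorial * rexp b := by rw [mul_right_comm, ← Real.exp_add]; ring_nf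
  calc (x + s + 1) ^ k * rexp (-b * (x + s))
      ≤ (x + 1) ^ k * (s + 1) ^ k * (rexp (-b * s) * rexp (-b * x)) := by
        rw [← Real.exp_add, show -b * s + -b * x = -b * (x + s) by ring]
        gcongr
    _ = (s + 1) ^ k * rexp (-b * s) * ((x + 1) ^ k * rexp (-b * x)) := by ring
    _ ≤ k.factorial / b ^ k * rexp b * ((x + 1) ^ k * rexp (-b * x)) := by gcongr

lemma exists_integral_add_one_pow_mul_exp_neg_le {b : ℝ} (hb : 0 < b) (k : ℕ) :
    ∃ M, ∀ x y, 0 ≤ x → x ≤ y →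
      ∫ t in x..y, (t + 1) ^ k * rexp (-b * t) ≤ M * ((x + 1) ^ k * rexp (-b * x)) := by
  obtain ⟨M, hM0, hM⟩ := exists_add_one_pow_mul_exp_neg_le (half_pos hb) k
  refine ⟨M * (2 / b), fun x y hx hxy => ?_⟩
  have hsplit (t : ℝ) : rexp (-b * t) = rexp (-(b / 2) * t) * rexp (-(b / 2) * t) := by
    rw [← Real.exp_add]; ring_nf
  have hexp : ∫ t in x..y, rexp (-(b / 2) * t)
      = 2 / b * (rexp (-(b / 2) * x) - rexp (-(b / 2) * y)) := by
    rw [integral_comp_mul_left (fun t => rexp t) (by linarith : -(b / 2) ≠ 0), integral_exp,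
      smul_eq_mul]
    field_simp
    ring
  calc ∫ t in x..y, (t + 1) ^ k * rexp (-b * t)
      ≤ ∫ t in x..y, M * ((x + 1) ^ k * rexp (-(b / 2) * x)) * rexp (-(b / 2) * t) :=
        integral_mono_on hxy (Continuous.intervalIntegrable (by fun_prop) _ _)
          (Continuous.intervalIntegrable (by fun_prop) _ _) fun t ht => by
            rw [hsplit, ← mul_assoc]
            exact mul_le_mul_of_nonneg_right (hM x t hx ht.1) (Real.exp_pos _).le
    _ = M * ((x + 1) ^ k * rexp (-(b / 2) * x))
          * (2 / b * (rexp (-(b / 2) * x) - rexp (-(b / 2) * y))) := by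
        rw [intervalIntegral.integral_const_mul, hexp]
    _ ≤ M * ((x + 1) ^ k * rexp (-(b / 2) * x)) * (2 / b * rexp (-(b / 2) * x)) := by
        gcongr
        linarith [Real.exp_pos (-(b / 2) * y)]
    _ = M * (2 / b) * ((x + 1) ^ k * rexp (-b * x)) := by rw [hsplit x]; ring

lemma tendsto_add_one_pow_mul_exp_neg_mul {b : ℝ} (hb : 0 < b) (k : ℕ) :
    Tendsto (fun x : ℝ => (x + 1) ^ k * rexp (-b * x)) atTop (𝓝 0) := by
  have h := ((tendsto_rpow_mul_exp_neg_mul_atTop_nhds_zero k b hb).comp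
    (tendsto_atTop_add_const_right _ 1 tendsto_id)).const_mul (rexp b)
  rw [mul_zero] at h
  refine h.congr fun x => ?_
  simp only [Function.comp, id, Real.rpow_natCast]
  rw [mul_left_comm, ← Real.exp_add]
  ring_nf

/-- Integration by parts against `G = ∫₀ˣ u` moves the growth bound on `G` to `∫ₓʸ e^{-t} u`. -/
lemma exists_integral_exp_neg_mul_le {u : ℝ → ℝ} (hu : Continuous u)
    (hu0 : ∀ t, 0 ≤ t → 0 ≤ u t) {k : ℕ} {C : ℝ} (hC : 0 ≤ C)
    (hb : ∀ x, 0 ≤ x → ∫ s in (0:ℝ)..x, u s ≤ C * (x + 1) ^ k * rexp (x / 2)) :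
    ∃ M, ∀ x y, 0 ≤ x → x ≤ y →
      ∫ t in x..y, rexp (-t) * u t ≤ M * ((x + 1) ^ k * rexp (-(1 / 2) * x)) := by
  obtain ⟨M₁, -, hM₁⟩ := exists_add_one_pow_mul_exp_neg_le (b := 1 / 2) (by norm_num) k
  obtain ⟨M₂, hM₂⟩ := exists_integral_add_one_pow_mul_exp_neg_le (b := 1 / 2) (by norm_num) k
  refine ⟨C * (M₁ + M₂), fun x y hx hxy => ?_⟩
  set G : ℝ → ℝ := fun x => ∫ s in (0:ℝ)..x, u s
  have hGc : Continuous G := continuous_primitive (fun a b => hu.intervalIntegrable a b) 0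
  have hG (t : ℝ) (ht : 0 ≤ t) : rexp (-t) * G t ≤ C * ((t + 1) ^ k * rexp (-(1 / 2) * t)) :=
    calc rexp (-t) * G t ≤ rexp (-t) * (C * (t + 1) ^ k * rexp (t / 2)) := by gcongr; exact hb t ht
      _ = C * ((t + 1) ^ k * rexp (-(1 / 2) * t)) := by
        rw [show rexp (-(1 / 2) * t) = rexp (-t) * rexp (t / 2) by rw [← Real.exp_add]; ring_nf]
        ring
  have hibp : ∫ t in x..y, rexp (-t) * u t
      = rexp (-y) * G y - rexp (-x) * G x + ∫ t in x..y, rexp (-t) * G t := by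
    rw [integral_mul_deriv_eq_deriv_mul (u' := fun t => -rexp (-t))
      (fun t _ => by simpa using (hasDerivAt_neg t).exp)
      (fun t _ => (hu.integral_hasStrictDerivAt 0 t).hasDerivAt)
      (Continuous.intervalIntegrable (by fun_prop) _ _) (hu.intervalIntegrable x y)]
    simp only [neg_mul, intervalIntegral.integral_neg, sub_neg_eq_add, G]
  have hGx : 0 ≤ rexp (-x) * G x :=
    mul_nonneg (Real.exp_pos _).le (integral_nonneg hx fun s hs => hu0 s hs.1)
  calc ∫ t in x..y, rexp (-t) * u t
      ≤ rexp (-y) * G y + ∫ t in x..y, rexp (-t) * G t := by rw [hibp]; linarith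
    _ ≤ C * ((y + 1) ^ k * rexp (-(1 / 2) * y))
          + ∫ t in x..y, C * ((t + 1) ^ k * rexp (-(1 / 2) * t)) :=
        add_le_add (hG y (hx.trans hxy)) (integral_mono_on hxy
          (Continuous.intervalIntegrable (by fun_prop) _ _)
          (Continuous.intervalIntegrable (by fun_prop) _ _) fun t ht => hG t (hx.trans ht.1))
    _ ≤ C * (M₁ * ((x + 1) ^ k * rexp (-(1 / 2) * x)))
          + C * (M₂ * ((x + 1) ^ k * rexp (-(1 / 2) * x))) := by
        rw [intervalIntegral.integral_const_mul]
        exact add_le_add (mul_le_mul_of_nonneg_left (hM₁ x y hx hxy) hC)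
          (mul_le_mul_of_nonneg_left (hM₂ x y hx hxy) hC)
    _ = C * (M₁ + M₂) * ((x + 1) ^ k * rexp (-(1 / 2) * x)) := by ring

lemma exists_norm_sub_le_of_norm_sub_le {ι E : Type*} [SemilatticeSup ι] [Nonempty ι]
    [NormedAddCommGroup E] [CompleteSpace E] {B : ι → E} {ε : ι → ℝ} {i₀ : ι}
    (hε : Tendsto ε atTop (𝓝 0)) (hB : ∀ i j, i₀ ≤ i → i ≤ j → ‖B j - B i‖ ≤ ε i) :
    ∃ A, ∀ i, i₀ ≤ i → ‖B i - A‖ ≤ ε i := by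
  have hcauchy : CauchySeq B := by
    refine Metric.cauchySeq_iff'.2 fun δ hδ => ?_
    obtain ⟨N, hN₀, hN⟩ := ((eventually_ge_atTop i₀).and (hε.eventually (gt_mem_nhds hδ))).exists
    exact ⟨N, fun n hn => (dist_eq_norm (B n) (B N) ▸ hB N n hN₀ hn).trans_lt hN⟩
  obtain ⟨A, hA⟩ := cauchySeq_tendsto_of_complete hcauchy
  refine ⟨A, fun i hi => ?_⟩
  rw [norm_sub_rev]
  exact le_of_tendsto (hA.sub_const (B i)).norm
    ((eventually_ge_atTop i).mono fun j hj => hB i j hi hj)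

lemma exists_memRw_exp_mul_integral_sub {g : ℝ → ℂ} (hg : Continuous g) (hgR : memRw g) :
    ∃ A : ℂ, memRw (fun x => cexp x * ((∫ t in (0:ℝ)..x, cexp (-t) * g t) - A)) := by
  obtain ⟨-, k, C, hC, hb⟩ := memRw_iff.1 hgR
  obtain ⟨M, hM⟩ := exists_integral_exp_neg_mul_le hg.norm (fun _ _ => norm_nonneg _) hC hb
  have hcont : Continuous fun t : ℝ => cexp (-t) * g t := by fun_prop
  set B : ℝ → ℂ := fun x => ∫ t in (0:ℝ)..x, cexp (-t) * g t
  have hB (x y : ℝ) (hx : 0 ≤ x) (hxy : x ≤ y) :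
      ‖B y - B x‖ ≤ M * ((x + 1) ^ k * rexp (-(1 / 2) * x)) := by
    rw [integral_interval_sub_left (hcont.intervalIntegrable _ _) (hcont.intervalIntegrable _ _)]
    calc ‖∫ t in x..y, cexp (-t) * g t‖ ≤ ∫ t in x..y, ‖cexp (-t) * g t‖ :=
          intervalIntegral.norm_integral_le_integral_norm hxy
      _ = ∫ t in x..y, rexp (-t) * ‖g t‖ := by
          simp only [norm_mul, ← Complex.ofReal_neg, Complex.norm_exp_ofReal]
      _ ≤ M * ((x + 1) ^ k * rexp (-(1 / 2) * x)) := hM x y hx hxy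
  have hε : Tendsto (fun x : ℝ => M * ((x + 1) ^ k * rexp (-(1 / 2) * x))) atTop (𝓝 0) := by
    simpa using (tendsto_add_one_pow_mul_exp_neg_mul (by norm_num : (0:ℝ) < 1 / 2) k).const_mul M
  obtain ⟨A, hA⟩ := exists_norm_sub_le_of_norm_sub_le hε hB
  have hBc : Continuous B := continuous_primitive (fun a b => hcont.intervalIntegrable a b) 0
  refine ⟨A, memRw_of_norm_le_weight (by fun_prop) (k := k) (C := M) fun x hx => ?_⟩
  calc ‖cexp x * (B x - A)‖ = rexp x * ‖B x - A‖ := by rw [norm_mul, Complex.norm_exp_ofReal]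
    _ ≤ rexp x * (M * ((x + 1) ^ k * rexp (-(1 / 2) * x))) := by gcongr; exact hA x hx
    _ = M * (x + 1) ^ k * rexp (x / 2) := by
      rw [show rexp (x / 2) = rexp x * rexp (-(1 / 2) * x) by rw [← Real.exp_add]; ring_nf]
      ring

lemma exists_memRw_sub_const_mul_exp {f : ℝ → ℂ} (hf : Continuous f) (hL : memRw (Lop f)) :
    ∃ A : ℂ, memRw (fun x => f x - A * cexp x) := by
  obtain ⟨A, hA⟩ := exists_memRw_exp_mul_integral_sub (continuous_Lop hf) hL
  refine ⟨A, (memRw_congr fun x _ => ?_).1 (memRw_add hL hA)⟩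
  show f x - Pop f x + _ = _
  rw [Pop_eq_exp_mul_integral hf]
  ring

lemma memFw_Lop_of_memFw_succ {f : ℝ → ℂ} (hf : Continuous f) {m : ℕ} (h : memFw (m + 1) f) :
    memFw m (Lop f) := by
  obtain ⟨-, p, hp, hρ⟩ := h
  obtain ⟨r, rfl⟩ := exists_add_derivative_eq p
  have hρc : Continuous fun t => f t - polyExp (r + derivative r) t :=
    hf.sub (continuous_polyExp _)
  refine ⟨(continuous_Lop hf).continuousOn, derivative r,
    degree_derivative_lt_iff.2 ((degree_le_of_add_derivative_eq rfl).trans_lt hp), ?_⟩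
  refine (memRw_congr fun x _ => ?_).1 (memRw_add (memRw_Lop hρc hρ) (memRw_const (r.eval 0)))
  rw [Lop_sub_polyExp_add_derivative hf, polyExp]
  ring

lemma memFw_succ_of_memFw_Lop {f : ℝ → ℂ} (hf : Continuous f) {m : ℕ} (h : memFw m (Lop f)) :
    memFw (m + 1) f := by
  obtain ⟨-, q, hq, hg⟩ := h
  obtain ⟨Q, rfl⟩ := exists_derivative_eq q
  have hu : Continuous fun t => f t - polyExp (Q + derivative Q) t :=
    hf.sub (continuous_polyExp _)
  have hLu : memRw (Lop fun t => f t - polyExp (Q + derivative Q) t) :=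
    (memRw_congr fun x _ => (Lop_sub_polyExp_add_derivative hf Q x).symm).1
      (memRw_sub hg (memRw_const (Q.eval 0)))
  obtain ⟨A, hA⟩ := exists_memRw_sub_const_mul_exp hu hLu
  have hdeg : (Q + derivative Q + C A).degree < ↑(m + 1) := by
    have hQ : Q.degree < ↑(m + 1) := degree_derivative_lt_iff.1 hq
    have hq' : (derivative Q).degree < ↑(m + 1) := hq.trans (by exact_mod_cast m.lt_succ_self)
    have hA : (C A).degree < ↑(m + 1) := degree_C_le.trans_lt (by exact_mod_cast m.succ_pos)
    exact (degree_add_le _ _).trans_lt (max_lt ((degree_add_le _ _).trans_lt (max_lt hQ hq')) hA)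
  refine ⟨hf.continuousOn, Q + derivative Q + C A, hdeg, (memRw_congr fun x _ => ?_).1 hA⟩
  simp only [polyExp, eval_add, eval_C]
  ring

lemma memFw_succ_iff {f : ℝ → ℂ} (hf : Continuous f) {m : ℕ} :
    memFw (m + 1) f ↔ memFw m (Lop f) :=
  ⟨memFw_Lop_of_memFw_succ hf, memFw_succ_of_memFw_Lop hf⟩

lemma memFw_zero_iff {f : ℝ → ℂ} : memFw 0 f ↔ memRw f := by
  constructor
  · rintro ⟨-, p, hp, hr⟩
    obtain rfl : p = 0 := by simpa using hp
    simpa using hr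
  · exact fun h => ⟨(memRw_iff.1 h).1, 0, by simp, by simpa using h⟩

lemma memFw_congr {f g : ℝ → ℂ} (h : EqOn f g (Ici 0)) {m : ℕ} : memFw m f ↔ memFw m g :=
  and_congr (continuousOn_congr h) <| exists_congr fun _ => and_congr_right fun _ =>
    memRw_congr fun x hx => by simp only [h hx]

lemma memFw_iff_memRw_Lop_iterate {f : ℝ → ℂ} (hf : Continuous f) (m : ℕ) :
    memFw m f ↔ memRw (Lop^[m] f) := by
  induction m generalizing f with
  | zero => exact memFw_zero_iff
  | succ m ih => rw [Function.iterate_succ_apply, ← ih (continuous_Lop hf), memFw_succ_iff hf]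

theorem fw_iff_Lop_iter_mem_Rw_general (m : ℕ) (f : ℝ → ℂ)
    (hf : ContinuousOn f (Set.Ici 0)) :
    memFw m f ↔ memRw (Lop^[m] f) := by
  set F : ℝ → ℂ := fun x => f (max x 0)
  have hF : EqOn f F (Ici 0) := fun x (hx : 0 ≤ x) => by simp only [F, max_eq_left hx]
  have hFc : Continuous F :=
    hf.comp_continuous (continuous_id.max continuous_const) fun x => le_max_right x 0
  rw [memFw_congr hF, memRw_congr (Lop_iterate_eqOn hF m)]
  exact memFw_iff_memRw_Lop_iterate hFc m

/-- for `m ≥ 1` and `f` continuous on `[0,∞)`,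
`f ∈ 𝓕_w^m` if and only if `𝓛^m f ∈ 𝓡_w`. -/
theorem fw_iff_Lop_iter_mem_Rw (m : ℕ) (hm : 1 ≤ m) (f : ℝ → ℂ)
    (hf : ContinuousOn f (Set.Ici 0)) :
    memFw m f ↔ memRw (Lop^[m] f) :=
  fw_iff_Lop_iter_mem_Rw_general m f hf
end
end

section
/- For all c₁, c₂ ≥ 0 there exists a constant K = K(c₁, c₂) > 0 such that for every f ∈ 𝓡_w^{c₁} and every g ∈ 𝓡_w^{c₂}, the convolution f ∗ g belongs to 𝓡_w^{c₁+c₂+1} and ‖f ∗ g‖_{𝓡_w^{c₁+c₂+1}} ≤ K ‖f‖_{𝓡_w^{c₁}} ‖g‖_{𝓡_w^{c₂}}. -/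
open MeasureTheory Real Set

noncomputable section

/-- The norm `‖f‖_{𝓡_w^c}`: the supremum over integers `n ≥ 1` of
`(∫₀ⁿ |f|) / ((n+1)^c e^{n/2})` (indexed here by `n = k + 1`, `k : ℕ`). -/
def RwNorm (c : ℝ) (f : ℝ → ℂ) : ℝ :=
  ⨆ k : ℕ, (∫ s in (0:ℝ)..((k:ℝ) + 1), ‖f s‖) /
    (((k:ℝ) + 2) ^ c * Real.exp (((k:ℝ) + 1) / 2))

/-- Convolution of two functions on `[0,∞)`: `(f ∗ g)(x) = ∫₀ˣ f(t) g(x−t) dt`. -/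
def conv (f g : ℝ → ℂ) : ℝ → ℂ := fun x => ∫ t in (0:ℝ)..x, f t * g (x - t)
/-!
Bounding `|f ∗ g|` by `|f| ∗ |g|` and exchanging the order of integration over the triangle
`0 ≤ t ≤ x ≤ n` gives `∫₀ⁿ |f ∗ g| ≤ ∫₀ⁿ |f(t)| ∫₀^{n-t} |g| dt`. The inner integral is at most
`‖g‖ (n+2)^{c₂} e^{(n+1)/2} e^{-t/2}`, and cutting `[0, n]` into unit intervals,
`∫₀ⁿ |f(t)| e^{-t/2} dt ≤ n e^{1/2} ‖f‖ (n+1)^{c₁}`. The weight `e^{-t/2}` is what keeps the growth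
at `e^{n/2}`, at the price of the single extra power of `n + 1`.
-/

theorem intervalIntegral_integral_triangle_swap {E : Type*} [NormedAddCommGroup E]
    [NormedSpace ℝ E] {H : ℝ → ℝ → E} {a b : ℝ} (hab : a ≤ b)
    (hH : IntegrableOn (Function.uncurry H) (Icc a b ×ˢ Icc a b ∩ {p | p.2 ≤ p.1})) :
    ∫ x in a..b, ∫ t in a..x, H x t = ∫ t in a..b, ∫ x in t..b, H x t := by
  set μ := volume.restrict (Ioc a b)
  set φ : ℝ × ℝ → E := {p | p.2 ≤ p.1}.indicator (Function.uncurry H)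
  have hφ : Integrable φ (μ.prod μ) := by
    have hle : MeasurableSet {p : ℝ × ℝ | p.2 ≤ p.1} :=
      measurableSet_le measurable_snd measurable_fst
    rw [Measure.prod_restrict, ← Measure.volume_eq_prod, integrable_indicator_iff hle,
      IntegrableOn, Measure.restrict_restrict hle, inter_comm]
    exact hH.mono_set
      (inter_subset_inter_left _ (prod_mono Ioc_subset_Icc_self Ioc_subset_Icc_self))
  have hleft : ∀ x ∈ Ioc a b, ∫ t, φ (x, t) ∂μ = ∫ t in a..x, H x t := by
    intro x hx
    have : (fun t => φ (x, t)) = (Iic x).indicator (H x) := by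
      ext t; simp [φ, indicator_apply]
    rw [this, setIntegral_indicator measurableSet_Iic, Ioc_inter_Iic, min_eq_right hx.2,
      intervalIntegral.integral_of_le hx.1.le]
  have hright : ∀ t ∈ Ioc a b, ∫ x, φ (x, t) ∂μ = ∫ x in t..b, H x t := by
    intro t ht
    have : (fun x => φ (x, t)) = (Ici t).indicator (fun x => H x t) := by
      ext x; simp [φ, indicator_apply]
    have hsec : Ioc a b ∩ Ici t = Icc t b := by
      ext x; simp only [mem_inter_iff, mem_Ioc, mem_Ici, mem_Icc]; grind [ht.1]
    rw [this, setIntegral_indicator measurableSet_Ici, hsec, integral_Icc_eq_integral_Ioc,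
      intervalIntegral.integral_of_le ht.2]
  rw [intervalIntegral.integral_of_le hab, intervalIntegral.integral_of_le hab,
    ← setIntegral_congr_fun measurableSet_Ioc hleft,
    ← setIntegral_congr_fun measurableSet_Ioc hright]
  exact integral_integral_swap hφ

theorem intervalIntegrable_of_continuousOn_Ici {E : Type*} [NormedAddCommGroup E] {u : ℝ → E}
    {c a b : ℝ} (hu : ContinuousOn u (Ici c)) (ha : c ≤ a) (hb : c ≤ b) :
    IntervalIntegrable u volume a b :=
  (hu.mono fun _ hx => (le_min ha hb).trans hx.1).intervalIntegrable

theorem continuousOn_integral_mul_sub {E : Type*} [NormedRing E] [NormedSpace ℝ E]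
    {f g : ℝ → E} (hf : ContinuousOn f (Ici 0)) (hg : ContinuousOn g (Ici 0)) :
    ContinuousOn (fun x => ∫ t in (0:ℝ)..x, f t * g (x - t)) (Ici 0) := by
  -- `f (max · 0)` and `g (max · 0)` are continuous and agree with `f`, `g` where it matters.
  have hmax : Continuous fun t : ℝ => max t 0 := continuous_id.max continuous_const
  have hf' := hf.comp_continuous hmax fun t => le_max_right t 0
  have hg' := hg.comp_continuous hmax fun t => le_max_right t 0
  refine (intervalIntegral.continuous_parametric_intervalIntegral_of_continuous
    (f := fun x t => f (max t 0) * g (max (x - t) 0)) (μ := volume) (a₀ := 0)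
    ((hf'.comp continuous_snd).mul (hg'.comp (continuous_fst.sub continuous_snd)))
    continuous_id).continuousOn.congr fun x hx => ?_
  refine intervalIntegral.integral_congr fun t ht => ?_
  rw [uIcc_of_le hx] at ht
  simp only [max_eq_left ht.1, max_eq_left (sub_nonneg.2 ht.2)]

theorem integral_norm_conv_le {f g : ℝ → ℂ} (hf : ContinuousOn f (Ici 0))
    (hg : ContinuousOn g (Ici 0)) {y : ℝ} (hy : 0 ≤ y) :
    ∫ x in (0:ℝ)..y, ‖conv f g x‖ ≤ ∫ t in (0:ℝ)..y, ‖f t‖ * ∫ u in (0:ℝ)..(y - t), ‖g u‖ := by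
  have htri : ContinuousOn (Function.uncurry fun x t => ‖f t‖ * ‖g (x - t)‖)
      (Icc 0 y ×ˢ Icc 0 y ∩ {p | p.2 ≤ p.1}) :=
    (hf.norm.comp continuousOn_snd fun p hp => hp.1.2.1).mul
      (hg.norm.comp (continuousOn_fst.sub continuousOn_snd) fun p hp =>
        mem_Ici.2 (sub_nonneg.2 hp.2))
  calc ∫ x in (0:ℝ)..y, ‖conv f g x‖
      ≤ ∫ x in (0:ℝ)..y, ∫ t in (0:ℝ)..x, ‖f t‖ * ‖g (x - t)‖ := by
        refine intervalIntegral.integral_mono_on hy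
          (intervalIntegrable_of_continuousOn_Ici
            (continuousOn_integral_mul_sub hf hg).norm le_rfl hy)
          (intervalIntegrable_of_continuousOn_Ici
            (continuousOn_integral_mul_sub hf.norm hg.norm) le_rfl hy) fun x hx => ?_
        refine (intervalIntegral.norm_integral_le_integral_norm hx.1).trans_eq ?_
        simp only [norm_mul]
    _ = ∫ t in (0:ℝ)..y, ∫ x in t..y, ‖f t‖ * ‖g (x - t)‖ :=
        intervalIntegral_integral_triangle_swap hy (htri.integrableOn_compact
          ((isCompact_Icc.prod isCompact_Icc).inter_right
            (isClosed_le continuous_snd continuous_fst)))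
    _ = ∫ t in (0:ℝ)..y, ‖f t‖ * ∫ u in (0:ℝ)..(y - t), ‖g u‖ := by
        refine intervalIntegral.integral_congr fun t _ => ?_
        simp only [intervalIntegral.integral_const_mul,
          intervalIntegral.integral_comp_sub_right (fun u => ‖g u‖), sub_self]

theorem RwNorm_nonneg (c : ℝ) (f : ℝ → ℂ) : 0 ≤ RwNorm c f :=
  Real.iSup_nonneg fun _ => div_nonneg
    (intervalIntegral.integral_nonneg (by positivity) fun _ _ => norm_nonneg _) (by positivity)

section RwNorm

variable {c : ℝ} {f : ℝ → ℂ}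

theorem integral_norm_le_RwNorm_mul (hf : memRwC c f) (k : ℕ) :
    ∫ s in (0:ℝ)..((k:ℝ) + 1), ‖f s‖ ≤
      RwNorm c f * (((k:ℝ) + 2) ^ c * Real.exp (((k:ℝ) + 1) / 2)) := by
  obtain ⟨-, C, -, hC⟩ := hf
  have hbdd : BddAbove (range fun k : ℕ => (∫ s in (0:ℝ)..((k:ℝ) + 1), ‖f s‖) /
      (((k:ℝ) + 2) ^ c * Real.exp (((k:ℝ) + 1) / 2))) := by
    refine ⟨C, forall_mem_range.2 fun k => (div_le_iff₀ (by positivity)).2 ?_⟩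
    have := hC (k + 1) k.succ_pos
    rw [Nat.cast_succ, add_assoc, one_add_one_eq_two] at this
    linarith
  exact (div_le_iff₀ (by positivity)).1 (le_ciSup hbdd k)

theorem integral_norm_le_RwNorm_mul_of_nonneg (hf : memRwC c f) (hc : 0 ≤ c) {y : ℝ}
    (hy : 0 ≤ y) :
    ∫ s in (0:ℝ)..y, ‖f s‖ ≤ RwNorm c f * ((y + 2) ^ c * Real.exp ((y + 1) / 2)) := by
  have hk : (⌊y⌋₊ : ℝ) ≤ y := Nat.floor_le hy
  have hk' : y ≤ ⌊y⌋₊ + 1 := (Nat.lt_floor_add_one y).le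
  calc ∫ s in (0:ℝ)..y, ‖f s‖
      ≤ ∫ s in (0:ℝ)..((⌊y⌋₊ : ℝ) + 1), ‖f s‖ :=
        intervalIntegral.integral_mono_interval le_rfl hy hk'
          (.of_forall fun _ => norm_nonneg _)
          (intervalIntegrable_of_continuousOn_Ici hf.1.norm le_rfl (by positivity))
    _ ≤ RwNorm c f * (((⌊y⌋₊ : ℝ) + 2) ^ c * Real.exp (((⌊y⌋₊ : ℝ) + 1) / 2)) :=
        integral_norm_le_RwNorm_mul hf _
    _ ≤ RwNorm c f * ((y + 2) ^ c * Real.exp ((y + 1) / 2)) := by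
        have := RwNorm_nonneg c f
        gcongr

theorem integral_norm_mul_exp_le (hf : memRwC c f) (hc : 0 ≤ c) (n : ℕ) :
    ∫ t in (0:ℝ)..n, ‖f t‖ * Real.exp (-t / 2) ≤
      n * (RwNorm c f * Real.exp (1 / 2) * ((n:ℝ) + 1) ^ c) := by
  have hcont : ContinuousOn (fun t => ‖f t‖ * Real.exp (-t / 2)) (Ici 0) :=
    hf.1.norm.mul (by fun_prop)
  have hunit : ∀ k < n, ∫ t in (k:ℝ)..((k:ℝ) + 1), ‖f t‖ * Real.exp (-t / 2) ≤
      RwNorm c f * Real.exp (1 / 2) * ((n:ℝ) + 1) ^ c := by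
    intro k hkn
    have hkn' : (k:ℝ) + 2 ≤ n + 1 := by norm_cast; omega
    have hexp : Real.exp (((k:ℝ) + 1) / 2) * Real.exp (-k / 2) = Real.exp (1 / 2) := by
      rw [← Real.exp_add]; ring_nf
    calc ∫ t in (k:ℝ)..((k:ℝ) + 1), ‖f t‖ * Real.exp (-t / 2)
        ≤ ∫ t in (k:ℝ)..((k:ℝ) + 1), ‖f t‖ * Real.exp (-k / 2) := by
          refine intervalIntegral.integral_mono_on (by linarith)
            (intervalIntegrable_of_continuousOn_Ici hcont k.cast_nonneg (by positivity))
            (intervalIntegrable_of_continuousOn_Ici (hf.1.norm.mul continuousOn_const)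
              k.cast_nonneg (by positivity)) fun t ht => ?_
          gcongr
          exact ht.1
      _ = (∫ t in (k:ℝ)..((k:ℝ) + 1), ‖f t‖) * Real.exp (-k / 2) :=
          intervalIntegral.integral_mul_const _ _
      _ ≤ (∫ t in (0:ℝ)..((k:ℝ) + 1), ‖f t‖) * Real.exp (-k / 2) := by
          gcongr
          exact intervalIntegral.integral_mono_interval k.cast_nonneg (by linarith) le_rfl
            (.of_forall fun _ => norm_nonneg _)
            (intervalIntegrable_of_continuousOn_Ici hf.1.norm le_rfl (by positivity))
      _ ≤ RwNorm c f * (((k:ℝ) + 2) ^ c * Real.exp (((k:ℝ) + 1) / 2)) * Real.exp (-k / 2) := by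
          gcongr
          exact integral_norm_le_RwNorm_mul hf k
      _ = RwNorm c f * Real.exp (1 / 2) * ((k:ℝ) + 2) ^ c := by
          rw [← hexp]; ring
      _ ≤ RwNorm c f * Real.exp (1 / 2) * ((n:ℝ) + 1) ^ c := by
          have := RwNorm_nonneg c f
          gcongr
  calc ∫ t in (0:ℝ)..n, ‖f t‖ * Real.exp (-t / 2)
      = ∑ k ∈ Finset.range n, ∫ t in (k:ℝ)..((k:ℝ) + 1), ‖f t‖ * Real.exp (-t / 2) := by
        have := intervalIntegral.sum_integral_adjacent_intervals (a := fun k : ℕ => (k:ℝ))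
          (n := n) (μ := volume) fun k _ =>
            intervalIntegrable_of_continuousOn_Ici hcont k.cast_nonneg (by positivity)
        push_cast at this
        exact this.symm
    _ ≤ ∑ _k ∈ Finset.range n, RwNorm c f * Real.exp (1 / 2) * ((n:ℝ) + 1) ^ c :=
        Finset.sum_le_sum fun k hk => hunit k (Finset.mem_range.1 hk)
    _ = n * (RwNorm c f * Real.exp (1 / 2) * ((n:ℝ) + 1) ^ c) := by simp

theorem memRwC_and_RwNorm_le (hf : ContinuousOn f (Ici 0)) {C : ℝ} (hC : 0 ≤ C)
    (h : ∀ n : ℕ, ∫ s in (0:ℝ)..n, ‖f s‖ ≤ C * (((n:ℝ) + 1) ^ c * Real.exp ((n:ℝ) / 2))) :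
    memRwC c f ∧ RwNorm c f ≤ C := by
  refine ⟨⟨hf, C + 1, by linarith, fun n _ => (h n).trans ?_⟩, ciSup_le fun k => ?_⟩
  · rw [← mul_assoc]
    gcongr
    linarith
  · rw [div_le_iff₀ (by positivity)]
    have := h (k + 1)
    rw [Nat.cast_succ, add_assoc, one_add_one_eq_two] at this
    linarith

end RwNorm

theorem integral_norm_conv_le_mul_integral_exp {c : ℝ} (hc : 0 ≤ c) {f g : ℝ → ℂ}
    (hf : ContinuousOn f (Ici 0)) (hg : memRwC c g) (n : ℕ) :
    ∫ x in (0:ℝ)..n, ‖conv f g x‖ ≤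
      RwNorm c g * (((n:ℝ) + 2) ^ c * Real.exp (((n:ℝ) + 1) / 2)) *
        ∫ t in (0:ℝ)..n, ‖f t‖ * Real.exp (-t / 2) := by
  set B := RwNorm c g * (((n:ℝ) + 2) ^ c * Real.exp (((n:ℝ) + 1) / 2))
  have hinner : ∀ t ∈ Ioc (0:ℝ) n, ‖f t‖ * ∫ u in (0:ℝ)..(n - t), ‖g u‖ ≤
      B * (‖f t‖ * Real.exp (-t / 2)) := by
    intro t ht
    have hexp : Real.exp (((n:ℝ) - t + 1) / 2) =
        Real.exp (((n:ℝ) + 1) / 2) * Real.exp (-t / 2) := by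
      rw [← Real.exp_add]; ring_nf
    calc ‖f t‖ * ∫ u in (0:ℝ)..(n - t), ‖g u‖
        ≤ ‖f t‖ * (RwNorm c g * (((n:ℝ) - t + 2) ^ c * Real.exp (((n:ℝ) - t + 1) / 2))) := by
          gcongr
          exact integral_norm_le_RwNorm_mul_of_nonneg hg hc (sub_nonneg.2 ht.2)
      _ ≤ ‖f t‖ * (RwNorm c g * (((n:ℝ) + 2) ^ c * Real.exp (((n:ℝ) - t + 1) / 2))) := by
          have := RwNorm_nonneg c g
          gcongr
          · linarith [ht.2]
          · linarith [ht.1]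
      _ = B * (‖f t‖ * Real.exp (-t / 2)) := by
          rw [hexp]; ring
  calc ∫ x in (0:ℝ)..n, ‖conv f g x‖
      ≤ ∫ t in (0:ℝ)..n, ‖f t‖ * ∫ u in (0:ℝ)..(n - t), ‖g u‖ :=
        integral_norm_conv_le hf hg.1 n.cast_nonneg
    _ ≤ ∫ t in (0:ℝ)..n, B * (‖f t‖ * Real.exp (-t / 2)) := by
        rw [intervalIntegral.integral_of_le n.cast_nonneg,
          intervalIntegral.integral_of_le n.cast_nonneg]
        refine integral_mono_of_nonneg ((ae_restrict_iff' measurableSet_Ioc).2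
          (.of_forall fun t ht => mul_nonneg (norm_nonneg _)
            (intervalIntegral.integral_nonneg (sub_nonneg.2 ht.2) fun _ _ => norm_nonneg _)))
          ((intervalIntegrable_of_continuousOn_Ici (continuousOn_const.mul
            (hf.norm.mul (by fun_prop))) le_rfl n.cast_nonneg).1)
          ((ae_restrict_iff' measurableSet_Ioc).2 (.of_forall hinner))
    _ = B * ∫ t in (0:ℝ)..n, ‖f t‖ * Real.exp (-t / 2) := intervalIntegral.integral_const_mul _ _

theorem integral_norm_conv_le_RwNorm_mul {c₁ c₂ : ℝ} (hc₁ : 0 ≤ c₁) (hc₂ : 0 ≤ c₂)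
    {f g : ℝ → ℂ} (hf : memRwC c₁ f) (hg : memRwC c₂ g) (n : ℕ) :
    ∫ x in (0:ℝ)..n, ‖conv f g x‖ ≤ Real.exp 1 * 2 ^ c₂ * RwNorm c₁ f * RwNorm c₂ g *
      (((n:ℝ) + 1) ^ (c₁ + c₂ + 1) * Real.exp ((n:ℝ) / 2)) := by
  have hNf := RwNorm_nonneg c₁ f
  have hNg := RwNorm_nonneg c₂ g
  have hexp : Real.exp (((n:ℝ) + 1) / 2) * Real.exp (1 / 2) =
      Real.exp 1 * Real.exp ((n:ℝ) / 2) := by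
    rw [← Real.exp_add, ← Real.exp_add]; ring_nf
  have htwo : ((n:ℝ) + 2) ^ c₂ ≤ 2 ^ c₂ * ((n:ℝ) + 1) ^ c₂ := by
    rw [← Real.mul_rpow (by norm_num) (by positivity)]
    gcongr
    linarith
  calc ∫ x in (0:ℝ)..n, ‖conv f g x‖
      ≤ RwNorm c₂ g * (((n:ℝ) + 2) ^ c₂ * Real.exp (((n:ℝ) + 1) / 2)) *
          ∫ t in (0:ℝ)..n, ‖f t‖ * Real.exp (-t / 2) :=
        integral_norm_conv_le_mul_integral_exp hc₂ hf.1 hg n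
    _ ≤ RwNorm c₂ g * (((n:ℝ) + 2) ^ c₂ * Real.exp (((n:ℝ) + 1) / 2)) *
          (n * (RwNorm c₁ f * Real.exp (1 / 2) * ((n:ℝ) + 1) ^ c₁)) := by
        gcongr
        exact integral_norm_mul_exp_le hf hc₁ n
    _ = RwNorm c₁ f * RwNorm c₂ g * (Real.exp (((n:ℝ) + 1) / 2) * Real.exp (1 / 2)) *
          ((n:ℝ) + 2) ^ c₂ * ((n:ℝ) + 1) ^ c₁ * n := by ring
    _ ≤ RwNorm c₁ f * RwNorm c₂ g * (Real.exp 1 * Real.exp ((n:ℝ) / 2)) *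
          (2 ^ c₂ * ((n:ℝ) + 1) ^ c₂) * ((n:ℝ) + 1) ^ c₁ * ((n:ℝ) + 1) := by
        rw [hexp]
        gcongr
        linarith
    _ = Real.exp 1 * 2 ^ c₂ * RwNorm c₁ f * RwNorm c₂ g *
          (((n:ℝ) + 1) ^ (c₁ + c₂ + 1) * Real.exp ((n:ℝ) / 2)) := by
        rw [Real.rpow_add (by positivity), Real.rpow_add (by positivity), Real.rpow_one]
        ring

/-- for all `c₁, c₂ ≥ 0` there is `K > 0` such that for `f ∈ 𝓡_w^{c₁}` and
`g ∈ 𝓡_w^{c₂}`, one has `f ∗ g ∈ 𝓡_w^{c₁+c₂+1}` with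
`‖f ∗ g‖_{𝓡_w^{c₁+c₂+1}} ≤ K ‖f‖_{𝓡_w^{c₁}} ‖g‖_{𝓡_w^{c₂}}`. -/
theorem conv_mem_RwC (c₁ c₂ : ℝ) (hc₁ : 0 ≤ c₁) (hc₂ : 0 ≤ c₂) :
    ∃ K : ℝ, 0 < K ∧ ∀ f g : ℝ → ℂ, memRwC c₁ f → memRwC c₂ g →
      memRwC (c₁ + c₂ + 1) (conv f g) ∧
      RwNorm (c₁ + c₂ + 1) (conv f g) ≤ K * RwNorm c₁ f * RwNorm c₂ g := by
  refine ⟨Real.exp 1 * 2 ^ c₂, by positivity, fun f g hf hg => ?_⟩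
  have hNf := RwNorm_nonneg c₁ f
  have hNg := RwNorm_nonneg c₂ g
  exact memRwC_and_RwNorm_le (continuousOn_integral_mul_sub hf.1 hg.1) (by positivity)
    (integral_norm_conv_le_RwNorm_mul hc₁ hc₂ hf hg)
end
end

section
/- For all continuous functions f₁, f₂ : [0,∞) → ℂ and all integers m₁, m₂ ≥ 0, one has the identity 𝓛^{m₁+m₂}(f₁ ∗ f₂) = (𝓛^{m₁} f₁) ∗ (𝓛^{m₂} f₂) on [0,∞). -/
open MeasureTheory Real Set

noncomputable section

lemma Pop_cont (f : ℝ → ℂ) (hf : Continuous f) : Continuous (Pop f) :=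
  intervalIntegral.continuous_primitive (fun a b => hf.intervalIntegrable a b) 0

lemma Lop_cont (f : ℝ → ℂ) (hf : Continuous f) : Continuous (Lop f) :=
  hf.sub (Pop_cont f hf)

lemma conv_comm (f g : ℝ → ℂ) (x : ℝ) : conv f g x = conv g f x := by
  unfold conv
  have := intervalIntegral.integral_comp_sub_left (a := 0) (b := x)
    (fun t => f t * g (x - t)) x
  simp only [sub_zero, sub_self] at this
  rw [← this]
  congr 1; ext t; ring_nf

lemma Pop_congr {f f' : ℝ → ℂ} (h : ∀ t, 0 ≤ t → f t = f' t) {x : ℝ} (hx : 0 ≤ x) :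
    Pop f x = Pop f' x := by
  unfold Pop
  apply intervalIntegral.integral_congr
  intro t ht
  rw [uIcc_of_le hx] at ht
  exact h t ht.1

lemma Lop_congr {f f' : ℝ → ℂ} (h : ∀ t, 0 ≤ t → f t = f' t) {x : ℝ} (hx : 0 ≤ x) :
    Lop f x = Lop f' x := by
  unfold Lop
  rw [h x hx, Pop_congr h hx]

lemma Lop_iter_congr {f f' : ℝ → ℂ} (h : ∀ t, 0 ≤ t → f t = f' t) (m : ℕ) :
    ∀ x, 0 ≤ x → Lop^[m] f x = Lop^[m] f' x := by
  induction m generalizing f f' with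
  | zero => simpa using h
  | succ n ih =>
      intro x hx
      rw [Function.iterate_succ_apply, Function.iterate_succ_apply]
      exact ih (fun t ht => Lop_congr h ht) x hx

lemma conv_congr {f f' g g' : ℝ → ℂ} (hf : ∀ t, 0 ≤ t → f t = f' t)
    (hg : ∀ t, 0 ≤ t → g t = g' t) {x : ℝ} (hx : 0 ≤ x) :
    conv f g x = conv f' g' x := by
  unfold conv
  apply intervalIntegral.integral_congr
  intro t ht
  rw [uIcc_of_le hx] at ht
  show f t * g (x - t) = f' t * g' (x - t)
  rw [hf t ht.1, hg (x - t) (by linarith [ht.2])]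

lemma conv_sub_left {f₁ f₂ g : ℝ → ℂ} (hf₁ : Continuous f₁) (hf₂ : Continuous f₂)
    (hg : Continuous g) (x : ℝ) :
    conv (fun t => f₁ t - f₂ t) g x = conv f₁ g x - conv f₂ g x := by
  unfold conv
  rw [← intervalIntegral.integral_sub]
  · congr 1; ext t; ring
  · exact (hf₁.mul (hg.comp (continuous_const.sub continuous_id))).intervalIntegrable 0 x
  · exact (hf₂.mul (hg.comp (continuous_const.sub continuous_id))).intervalIntegrable 0 x

lemma Pop_conv (f g : ℝ → ℂ) (hf : Continuous f) (hg : Continuous g)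
    {x : ℝ} (hx : 0 ≤ x) : Pop (conv f g) x = conv f (Pop g) x := by
  set G : ℝ → ℂ := (Ici (0:ℝ)).indicator g with hG
  have hGmeas : Measurable G := hg.measurable.indicator measurableSet_Ici
  -- integrability of the double integrand
  obtain ⟨C₁, hC₁⟩ := (isCompact_Icc (a := (0:ℝ)) (b := x)).exists_bound_of_continuousOn
    hf.continuousOn
  obtain ⟨C₂, hC₂⟩ := (isCompact_Icc (a := (0:ℝ)) (b := x)).exists_bound_of_continuousOn
    hg.continuousOn
  have hC₂0 : 0 ≤ C₂ := le_trans (norm_nonneg _) (hC₂ 0 ⟨le_refl _, hx⟩)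
  have hint : Integrable (Function.uncurry fun s t => f t * G (s - t))
      ((volume.restrict (Ioc 0 x)).prod (volume.restrict (Ioc 0 x))) := by
    have hmeas : Measurable (Function.uncurry fun s t => f t * G (s - t)) :=
      (hf.measurable.comp measurable_snd).mul
        (hGmeas.comp (measurable_fst.sub measurable_snd))
    refine ⟨hmeas.aestronglyMeasurable, ?_⟩
    apply MeasureTheory.HasFiniteIntegral.of_bounded (C := C₁ * C₂)
    rw [Measure.prod_restrict]
    rw [ae_restrict_iff' (measurableSet_Ioc.prod measurableSet_Ioc)]
    filter_upwards with p hp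
    obtain ⟨hp1, hp2⟩ := hp
    have h1 : ‖f p.2‖ ≤ C₁ := hC₁ p.2 ⟨hp2.1.le, hp2.2⟩
    have h2 : ‖G (p.1 - p.2)‖ ≤ C₂ := by
      rw [hG]
      by_cases h : (0:ℝ) ≤ p.1 - p.2
      · rw [Set.indicator_of_mem (mem_Ici.mpr h)]
        exact hC₂ _ ⟨h, by linarith [hp1.2, hp2.1.le]⟩
      · rw [Set.indicator_of_notMem (by simpa using h)]; simpa using hC₂0
    calc ‖Function.uncurry (fun s t => f t * G (s - t)) p‖
        = ‖f p.2‖ * ‖G (p.1 - p.2)‖ := norm_mul _ _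
      _ ≤ C₁ * C₂ := mul_le_mul h1 h2 (norm_nonneg _) (le_trans (norm_nonneg _) h1)
  have key : ∫ s in Ioc 0 x, ∫ t in Ioc 0 x, f t * G (s - t) ∂volume ∂volume
      = ∫ t in Ioc 0 x, ∫ s in Ioc 0 x, f t * G (s - t) ∂volume ∂volume :=
    integral_integral_swap hint
  -- LHS
  have lhs : Pop (conv f g) x
      = ∫ s in Ioc 0 x, ∫ t in Ioc 0 x, f t * G (s - t) ∂volume ∂volume := by
    rw [Pop, intervalIntegral.integral_of_le hx]
    apply setIntegral_congr_fun measurableSet_Ioc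
    intro s hs
    have hsx : s ≤ x := hs.2
    show conv f g s = ∫ t in Ioc 0 x, f t * G (s - t)
    have heq : (fun t => f t * G (s - t)) = (Iic s).indicator (fun t => f t * g (s - t)) := by
      funext t
      by_cases h : t ≤ s
      · rw [Set.indicator_of_mem (mem_Iic.mpr h), hG,
          Set.indicator_of_mem (mem_Ici.mpr (by linarith))]
      · rw [Set.indicator_of_notMem (by simpa using h), hG,
          Set.indicator_of_notMem (by simp; linarith), mul_zero]
    rw [heq, setIntegral_indicator measurableSet_Iic, Ioc_inter_Iic,
      min_eq_right hsx, conv, intervalIntegral.integral_of_le hs.1.le]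
  -- RHS
  have rhs : conv f (Pop g) x
      = ∫ t in Ioc 0 x, ∫ s in Ioc 0 x, f t * G (s - t) ∂volume ∂volume := by
    rw [conv, intervalIntegral.integral_of_le hx]
    apply setIntegral_congr_fun measurableSet_Ioc
    intro t ht
    have htx : t ≤ x := ht.2
    have hset : Ioc 0 x ∩ Ici t = Icc t x := by
      ext s; simp only [mem_inter_iff, mem_Ioc, mem_Ici, mem_Icc]
      constructor
      · rintro ⟨⟨_, h2⟩, h3⟩; exact ⟨h3, h2⟩
      · rintro ⟨h1, h2⟩; exact ⟨⟨lt_of_lt_of_le ht.1 h1, h2⟩, h1⟩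
    show f t * Pop g (x - t) = ∫ s in Ioc 0 x, f t * G (s - t)
    have heq : (fun s => f t * G (s - t)) = (Ici t).indicator (fun s => f t * g (s - t)) := by
      funext s
      by_cases h : t ≤ s
      · rw [Set.indicator_of_mem (mem_Ici.mpr h), hG,
          Set.indicator_of_mem (mem_Ici.mpr (by linarith))]
      · rw [Set.indicator_of_notMem (by simpa using h), hG,
          Set.indicator_of_notMem (by simp; linarith), mul_zero]
    rw [heq, setIntegral_indicator measurableSet_Ici, hset,
      integral_Icc_eq_integral_Ioc, ← intervalIntegral.integral_of_le htx,
      intervalIntegral.integral_const_mul,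
      intervalIntegral.integral_comp_sub_right (fun u => g u) t, sub_self]
    rfl
  rw [lhs, key, ← rhs]

lemma Pop_conv_left (f g : ℝ → ℂ) (hf : Continuous f) (hg : Continuous g)
    {x : ℝ} (hx : 0 ≤ x) : Pop (conv f g) x = conv (Pop f) g x := by
  have h : conv f g = conv g f := funext fun y => conv_comm f g y
  rw [h, Pop_conv g f hg hf hx, conv_comm]

lemma Lop_conv_left (f g : ℝ → ℂ) (hf : Continuous f) (hg : Continuous g)
    {x : ℝ} (hx : 0 ≤ x) : Lop (conv f g) x = conv (Lop f) g x := by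
  have : conv (Lop f) g x = conv f g x - conv (Pop f) g x := by
    rw [← conv_sub_left hf (Pop_cont f hf) hg x]; rfl
  rw [this, Lop, Pop_conv_left f g hf hg hx]

lemma Lop_iter_cont (f : ℝ → ℂ) (hf : Continuous f) (m : ℕ) :
    Continuous (Lop^[m] f) := by
  induction m generalizing f with
  | zero => simpa using hf
  | succ n ih =>
      rw [Function.iterate_succ_apply]
      exact ih _ (Lop_cont f hf)

lemma Lop_iter_conv_left (f g : ℝ → ℂ) (hf : Continuous f) (hg : Continuous g)
    (m : ℕ) : ∀ x, 0 ≤ x → Lop^[m] (conv f g) x = conv (Lop^[m] f) g x := by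
  induction m generalizing f with
  | zero => intro x _; rfl
  | succ n ih =>
      intro x hx
      rw [Function.iterate_succ_apply, Function.iterate_succ_apply]
      rw [Lop_iter_congr (fun t ht => Lop_conv_left f g hf hg ht) n x hx]
      exact ih (Lop f) (Lop_cont f hf) x hx

lemma Lop_iter_conv_right (f g : ℝ → ℂ) (hf : Continuous f) (hg : Continuous g)
    (m : ℕ) : ∀ x, 0 ≤ x → Lop^[m] (conv f g) x = conv f (Lop^[m] g) x := by
  intro x hx
  have h : conv f g = conv g f := funext fun y => conv_comm f g y
  rw [h, Lop_iter_conv_left g f hg hf m x hx, conv_comm]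

lemma main_cont (f g : ℝ → ℂ) (hf : Continuous f) (hg : Continuous g)
    (m₁ m₂ : ℕ) : ∀ x, 0 ≤ x →
    Lop^[m₁ + m₂] (conv f g) x = conv (Lop^[m₁] f) (Lop^[m₂] g) x := by
  intro x hx
  rw [add_comm, Function.iterate_add_apply]
  rw [Lop_iter_congr (fun t ht => Lop_iter_conv_left f g hf hg m₁ t ht) m₂ x hx]
  exact Lop_iter_conv_right (Lop^[m₁] f) g (Lop_iter_cont f hf m₁) hg m₂ x hx


/-- for continuous `f₁, f₂` on `[0,∞)` and integers `m₁, m₂ ≥ 0`,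
`𝓛^{m₁+m₂}(f₁ ∗ f₂) = (𝓛^{m₁} f₁) ∗ (𝓛^{m₂} f₂)` on `[0,∞)`. -/
theorem Lop_iter_conv (f₁ f₂ : ℝ → ℂ)
    (h₁ : ContinuousOn f₁ (Set.Ici 0)) (h₂ : ContinuousOn f₂ (Set.Ici 0))
    (m₁ m₂ : ℕ) :
    ∀ x : ℝ, 0 ≤ x →
      Lop^[m₁ + m₂] (conv f₁ f₂) x = conv (Lop^[m₁] f₁) (Lop^[m₂] f₂) x := by
  set F₁ : ℝ → ℂ := fun t => f₁ (max t 0) with hF₁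
  set F₂ : ℝ → ℂ := fun t => f₂ (max t 0) with hF₂
  have hcF₁ : Continuous F₁ :=
    h₁.comp_continuous (continuous_id.max continuous_const)
      (fun t => mem_Ici.mpr (le_max_right t 0))
  have hcF₂ : Continuous F₂ :=
    h₂.comp_continuous (continuous_id.max continuous_const)
      (fun t => mem_Ici.mpr (le_max_right t 0))
  have he₁ : ∀ t, 0 ≤ t → F₁ t = f₁ t := fun t ht => by
    simp [hF₁, max_eq_left ht]
  have he₂ : ∀ t, 0 ≤ t → F₂ t = f₂ t := fun t ht => by
    simp [hF₂, max_eq_left ht]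
  intro x hx
  have step1 : Lop^[m₁ + m₂] (conv f₁ f₂) x = Lop^[m₁ + m₂] (conv F₁ F₂) x :=
    Lop_iter_congr (fun t ht => (conv_congr he₁ he₂ ht).symm) _ x hx
  rw [step1, main_cont F₁ F₂ hcF₁ hcF₂ m₁ m₂ x hx]
  exact conv_congr (Lop_iter_congr he₁ m₁) (Lop_iter_congr he₂ m₂) hx
end
end

section
/- Let H : ℝ → [0,∞) be a continuous function with support contained in [−1,1] and with H(x) > 0 for every x with |x| < 1. Let 0 < α < 1/2 and 0 < ε < 1/4 − α². Then there exists a constant C > 0 (depending on H, α, ε) such that for every L ≥ 1 and every real number s with s² ≥ α² + ε, one has ∫_ℝ H(ℓ/L) e^{sℓ} dℓ ≥ C e^{(α+ε)L}. -/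
/-!
Put `β = √(α² + ε)`; the hypotheses on `α, ε` give `α + ε < β`, so `a = (α + ε) / β < 1`.
When `s ≥ β`, restrict the integral to `ℓ ∈ [aL, L]`: there `e^{sℓ} ≥ e^{βaL} = e^{(α+ε)L}`,
and `∫_{aL}^{L} H(ℓ/L) dℓ = L ∫_a^1 H > 0`. The case `s ≤ -β` is the mirror image `ℓ ↦ -ℓ`.
-/

open MeasureTheory Real Set

lemma integrable_comp_div_mul_exp {H : ℝ → ℝ} (hcont : Continuous H) (hH : HasCompactSupport H)
    {L : ℝ} (hL : L ≠ 0) (s : ℝ) : Integrable fun ℓ ↦ H (ℓ / L) * exp (s * ℓ) := by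
  have hcs : HasCompactSupport fun ℓ ↦ H (ℓ / L) := by
    simpa [div_eq_inv_mul] using hH.comp_smul (inv_ne_zero hL)
  exact (by fun_prop : Continuous fun ℓ ↦ H (ℓ / L) * exp (s * ℓ)).integrable_of_hasCompactSupport
    hcs.mul_right

lemma exp_mul_mul_integral_le_integral_comp_div_mul_exp {H : ℝ → ℝ} (hcont : Continuous H)
    (hH : HasCompactSupport H) (hnonneg : ∀ x, 0 ≤ H x) {a b β s L : ℝ} (ha : 0 ≤ a)
    (hab : a ≤ b) (hβ : 0 ≤ β) (hs : β ≤ s) (hL : 0 < L) :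
    exp (β * a * L) * (L * ∫ x in a..b, H x) ≤ ∫ ℓ, H (ℓ / L) * exp (s * ℓ) := by
  have hfi := integrable_comp_div_mul_exp hcont hH hL.ne' s
  have haL : 0 ≤ a * L := mul_nonneg ha hL.le
  calc exp (β * a * L) * (L * ∫ x in a..b, H x)
      = ∫ ℓ in a * L..b * L, H (ℓ / L) * exp (β * a * L) := by
        rw [intervalIntegral.integral_mul_const, intervalIntegral.integral_comp_div _ hL.ne',
          mul_div_cancel_right₀ _ hL.ne', mul_div_cancel_right₀ _ hL.ne', smul_eq_mul, mul_comm]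
    _ ≤ ∫ ℓ in a * L..b * L, H (ℓ / L) * exp (s * ℓ) := by
        refine intervalIntegral.integral_mono_on (by gcongr)
          (Continuous.intervalIntegrable (by fun_prop) _ _)
          (Continuous.intervalIntegrable (by fun_prop) _ _) fun ℓ hℓ ↦ ?_
        refine mul_le_mul_of_nonneg_left (exp_le_exp.mpr ?_) (hnonneg _)
        calc β * a * L = β * (a * L) := mul_assoc _ _ _
          _ ≤ s * ℓ := mul_le_mul hs hℓ.1 haL (hβ.trans hs)
    _ ≤ ∫ ℓ, H (ℓ / L) * exp (s * ℓ) := by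
        rw [intervalIntegral.integral_of_le (by gcongr)]
        exact setIntegral_le_integral hfi
          (.of_forall fun ℓ ↦ mul_nonneg (hnonneg _) (exp_pos _).le)

lemma exp_mul_mul_integral_le_integral_comp_div_mul_exp_of_le_abs {H : ℝ → ℝ}
    (hcont : Continuous H) (hH : HasCompactSupport H) (hnonneg : ∀ x, 0 ≤ H x) {a b β s L : ℝ}
    (ha : 0 ≤ a) (hab : a ≤ b) (hβ : 0 ≤ β) (hs : β ≤ |s|) (hL : 0 < L) :
    exp (β * a * L) * (L * min (∫ x in a..b, H x) (∫ x in a..b, H (-x))) ≤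
      ∫ ℓ, H (ℓ / L) * exp (s * ℓ) := by
  rcases le_or_gt 0 s with hs₀ | hs₀
  · rw [abs_of_nonneg hs₀] at hs
    refine le_trans ?_ (exp_mul_mul_integral_le_integral_comp_div_mul_exp hcont hH hnonneg ha hab
      hβ hs hL)
    gcongr
    exact min_le_left _ _
  · rw [abs_of_neg hs₀] at hs
    calc exp (β * a * L) * (L * min (∫ x in a..b, H x) (∫ x in a..b, H (-x)))
        ≤ exp (β * a * L) * (L * ∫ x in a..b, H (-x)) := by gcongr; exact min_le_right _ _
      _ ≤ ∫ ℓ, H (-(ℓ / L)) * exp (-s * ℓ) :=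
        exp_mul_mul_integral_le_integral_comp_div_mul_exp (by fun_prop)
          (hH.comp_homeomorph (Homeomorph.neg ℝ)) (fun x ↦ hnonneg _) ha hab hβ hs hL
      _ = ∫ ℓ, H (ℓ / L) * exp (s * ℓ) := by
        simpa [neg_div] using integral_neg_eq_self (fun ℓ ↦ H (ℓ / L) * exp (s * ℓ)) volume

lemma add_lt_sqrt_sq_add {α ε : ℝ} (hε : 0 < ε) (h : 2 * α + ε < 1) : α + ε < √(α ^ 2 + ε) := by
  rcases lt_or_ge (α + ε) 0 with hneg | hnonneg
  · exact hneg.trans_le (sqrt_nonneg _)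
  · rw [lt_sqrt hnonneg]
    nlinarith

/-- if `H : ℝ → [0,∞)` is continuous, supported in `[−1,1]` and positive on
`(−1,1)`, and `0 < α < 1/2`, `0 < ε < 1/4 − α²`, then there is `C > 0` such that for every
`L ≥ 1` and every real `s` with `s² ≥ α² + ε`, `∫ H(ℓ/L) e^{sℓ} dℓ ≥ C e^{(α+ε)L}`. -/
theorem exp_growth_of_test_integral (H : ℝ → ℝ) (hcont : Continuous H)
    (hsupp : Function.support H ⊆ Set.Icc (-1 : ℝ) 1)
    (hnonneg : ∀ x : ℝ, 0 ≤ H x)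
    (hpos : ∀ x : ℝ, |x| < 1 → 0 < H x)
    (α ε : ℝ) (hα₀ : 0 < α) (hα₁ : α < 1 / 2)
    (hε₀ : 0 < ε) (hε₁ : ε < 1 / 4 - α ^ 2) :
    ∃ C : ℝ, 0 < C ∧ ∀ L : ℝ, 1 ≤ L → ∀ s : ℝ, α ^ 2 + ε ≤ s ^ 2 →
      C * Real.exp ((α + ε) * L) ≤ ∫ ℓ : ℝ, H (ℓ / L) * Real.exp (s * ℓ) := by
  set β := √(α ^ 2 + ε)
  have h2αε : 2 * α + ε < 1 := by nlinarith
  have hβ : α + ε < β := add_lt_sqrt_sq_add hε₀ h2αε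
  have hβ₀ : 0 < β := by linarith
  set a := (α + ε) / β
  have ha₀ : 0 ≤ a := by positivity
  have ha₁ : a < 1 := (div_lt_one hβ₀).mpr hβ
  have hβa : β * a = α + ε := mul_div_cancel₀ _ hβ₀.ne'
  have hpos' : ∀ x ∈ Ioo a 1, 0 < H x ∧ 0 < H (-x) := fun x hx ↦ by
    have hx₁ : |x| < 1 := abs_lt.mpr ⟨by linarith [hx.1], hx.2⟩
    exact ⟨hpos x hx₁, hpos (-x) (by rwa [abs_neg])⟩
  set C := min (∫ x in a..1, H x) (∫ x in a..1, H (-x))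
  have hC : 0 < C := lt_min
    (intervalIntegral.intervalIntegral_pos_of_pos_on (hcont.intervalIntegrable _ _)
      (fun x hx ↦ (hpos' x hx).1) ha₁)
    (intervalIntegral.intervalIntegral_pos_of_pos_on
      ((by fun_prop : Continuous fun x ↦ H (-x)).intervalIntegrable _ _)
      (fun x hx ↦ (hpos' x hx).2) ha₁)
  refine ⟨C, hC, fun L hL s hs ↦ ?_⟩
  have hs' : β ≤ |s| := (sqrt_le_sqrt hs).trans_eq (sqrt_sq_eq_abs s)
  calc C * exp ((α + ε) * L) ≤ exp (β * a * L) * (L * C) := by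
        rw [hβa]; nlinarith [mul_le_mul_of_nonneg_left hL (mul_pos hC (exp_pos ((α + ε) * L))).le]
    _ ≤ ∫ ℓ, H (ℓ / L) * exp (s * ℓ) :=
      exp_mul_mul_integral_le_integral_comp_div_mul_exp_of_le_abs hcont
        (HasCompactSupport.of_support_subset_isCompact isCompact_Icc hsupp) hnonneg ha₀
        ha₁.le hβ₀.le hs' (by linarith)
end

section
/- There exist a continuous function f : [0,∞) → ℝ, a polynomial p, and a function r ∈ 𝓡_w with f(ℓ) = p(ℓ)e^ℓ + r(ℓ) for all ℓ ≥ 0 (so f is a weak Friedman–Ramanujan function), such that for every continuous compactly supported function F : ℝ → ℝ, ∫_{(0,∞)³} F(𝔏₈(x₁,x₂,x₃)) sinh(x₁/2) sinh(x₂/2) sinh(x₃/2) dx₁ dx₂ dx₃ = ∫₀^∞ F(ℓ) f(ℓ) dℓ. In other words, the pushforward under 𝔏₈ of the measure sinh(x₁/2)sinh(x₂/2)sinh(x₃/2) dx₁dx₂dx₃ on (0,∞)³ admits a density which is a weak Friedman–Ramanujan function. -/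
open MeasureTheory Real Set

noncomputable section

/-- Inverse hyperbolic cosine: `arcosh y = log (y + √(y² − 1))`. -/
def arcosh (y : ℝ) : ℝ := Real.log (y + Real.sqrt (y ^ 2 - 1))

/-- The figure-eight length function
`𝔏₈(x₁,x₂,x₃) = 2 arcosh(2 cosh(x₁/2)cosh(x₂/2) + cosh(x₃/2))`. -/
def L8 (x₁ x₂ x₃ : ℝ) : ℝ :=
  2 * _root_.arcosh (2 * Real.cosh (x₁ / 2) * Real.cosh (x₂ / 2) + Real.cosh (x₃ / 2))

/-!
Substituting `uᵢ = cosh (xᵢ / 2)` turns the measure into `8 du` on `(1, ∞)³` and `𝔏₈` into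
`2 arcosh (2 u₁ u₂ + u₃)`. Pushing Lebesgue measure on `(1, ∞)³` forward by `w = 2 u₁ u₂ + u₃`
gives the density `A ((w - 1) / 2)`, where `A c` is the area of `{u₁, u₂ > 1, u₁ u₂ < c}`.
Substituting back `w = cosh (ℓ / 2)` yields the density `4 sinh (ℓ / 2) A ((cosh (ℓ / 2) - 1) / 2)`.

For the asymptotics write `E = e^{ℓ/2}` and `g x = x log x - x`, so that `A c = g (max c 1) + 1`.
The point `max ((cosh (ℓ / 2) - 1) / 2) 1` lies within `1` of `E / 4`, and `g` is
`(ℓ / 2 + 3)`-Lipschitz on `[1/4, E]`; hence the density equals `2 E g (E / 4)`, which is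
`(ℓ / 4 - log 2 - 1 / 2) e^ℓ`, up to `O((ℓ + 1) E)`.
-/

lemma two_mul_arcosh_cosh_half {x : ℝ} (hx : 0 ≤ x) : 2 * Real.arcosh (cosh (x / 2)) = x := by
  rw [Real.arcosh_cosh (by positivity)]
  ring

lemma le_two_mul_arcosh {x y : ℝ} (hx : 0 ≤ x) (h : cosh (x / 2) ≤ y) :
    x ≤ 2 * Real.arcosh y := by
  conv_lhs => rw [← two_mul_arcosh_cosh_half hx]
  gcongr
  exact (Real.arcosh_le_arcosh (cosh_pos _) ((cosh_pos _).trans_le h)).mpr h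

lemma le_cosh_half_of_two_mul_arcosh_le {w M : ℝ} (hw : 1 ≤ w) (h : 2 * Real.arcosh w ≤ M) :
    w ≤ cosh (M / 2) := by
  have h₀ := Real.arcosh_nonneg hw
  rw [← Real.cosh_arcosh hw, cosh_le_cosh, abs_of_nonneg h₀, abs_of_nonneg (by linarith)]
  linarith

lemma hasDerivAt_cosh_half (x : ℝ) :
    HasDerivAt (fun x ↦ cosh (x / 2)) (sinh (x / 2) / 2) x := by
  simpa [div_eq_mul_inv] using ((hasDerivAt_id' x).div_const 2).cosh

lemma image_cosh_half_Ioi_zero : (fun x ↦ cosh (x / 2)) '' Ioi 0 = Ioi 1 := by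
  ext u
  constructor
  · rintro ⟨x, hx, rfl⟩
    exact one_lt_cosh.mpr (half_pos hx).ne'
  · intro hu
    refine ⟨2 * Real.arcosh u, by simpa using Real.arcosh_pos hu, ?_⟩
    simp [Real.cosh_arcosh (le_of_lt hu)]

lemma integral_Ioi_comp_cosh_half_mul_sinh_half (g : ℝ → ℝ) :
    ∫ x in Ioi 0, g (cosh (x / 2)) * sinh (x / 2) = 2 * ∫ u in Ioi 1, g u := by
  have hinj : InjOn (fun x ↦ cosh (x / 2)) (Ioi 0) := fun x hx y hy hxy ↦ by
    have := Real.cosh_injOn (mem_Ici.mpr (half_pos hx).le) (mem_Ici.mpr (half_pos hy).le) hxy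
    linarith
  rw [← image_cosh_half_Ioi_zero, integral_image_eq_integral_abs_deriv_smul measurableSet_Ioi
    (fun x _ ↦ (hasDerivAt_cosh_half x).hasDerivWithinAt) hinj, ← integral_const_mul]
  refine setIntegral_congr_fun measurableSet_Ioi fun x hx ↦ ?_
  have : 0 ≤ sinh (x / 2) := sinh_nonneg_iff.mpr (le_of_lt (half_pos hx))
  rw [smul_eq_mul, abs_of_nonneg (by positivity)]
  ring

lemma integral_Ioi_iterated_comp_cosh_half (Ψ : ℝ → ℝ → ℝ → ℝ) :
    ∫ x₁ in Ioi 0, ∫ x₂ in Ioi 0, ∫ x₃ in Ioi 0,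
        Ψ (cosh (x₁ / 2)) (cosh (x₂ / 2)) (cosh (x₃ / 2)) *
          (sinh (x₁ / 2) * sinh (x₂ / 2) * sinh (x₃ / 2))
      = 8 * ∫ u₁ in Ioi 1, ∫ u₂ in Ioi 1, ∫ u₃ in Ioi 1, Ψ u₁ u₂ u₃ := by
  have step (g : ℝ → ℝ) (s : ℝ) :
      ∫ x in Ioi 0, g (cosh (x / 2)) * (s * sinh (x / 2)) = (2 * ∫ u in Ioi 1, g u) * s := by
    simp_rw [mul_left_comm _ s, integral_const_mul, integral_Ioi_comp_cosh_half_mul_sinh_half,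
      mul_comm s]
  have h₃ (x₁ x₂ : ℝ) :=
    step (Ψ (cosh (x₁ / 2)) (cosh (x₂ / 2))) (sinh (x₁ / 2) * sinh (x₂ / 2))
  have h₂ (x₁ : ℝ) :=
    step (fun u₂ ↦ 2 * ∫ u₃ in Ioi 1, Ψ (cosh (x₁ / 2)) u₂ u₃) (sinh (x₁ / 2))
  simp only [h₃, h₂]
  rw [integral_Ioi_comp_cosh_half_mul_sinh_half
    fun u₁ ↦ 2 * ∫ u₂ in Ioi 1, 2 * ∫ u₃ in Ioi 1, Ψ u₁ u₂ u₃]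
  simp only [integral_const_mul]
  ring

lemma integral_Ioi_comp_const_add (g : ℝ → ℝ) (a b : ℝ) :
    ∫ u in Ioi b, g (a + u) = ∫ w in Ioi (a + b), g w := by
  have := (measurePreserving_add_left volume a).setIntegral_preimage_emb
    (measurableEmbedding_addLeft a) g (Ioi (a + b))
  rwa [preimage_const_add_Ioi, add_sub_cancel_left] at this

section Fubini

variable {α β γ E : Type*} [MeasurableSpace α] [MeasurableSpace β] [MeasurableSpace γ]
  {μ : Measure α} {ν : Measure β} {ρ : Measure γ} [SFinite μ] [SFinite ν] [SFinite ρ]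
  [NormedAddCommGroup E] [NormedSpace ℝ E]

lemma setIntegral_prod_prod {f : α × β × γ → E} {s : Set α} {t : Set β} {u : Set γ}
    (hs : MeasurableSet s) (hf : IntegrableOn f (s ×ˢ t ×ˢ u) (μ.prod (ν.prod ρ))) :
    ∫ p in s ×ˢ t ×ˢ u, f p ∂μ.prod (ν.prod ρ)
      = ∫ x in s, ∫ y in t, ∫ z in u, f (x, y, z) ∂ρ ∂ν ∂μ := by
  rw [setIntegral_prod _ hf]
  have hslice : ∀ᵐ x ∂μ.restrict s, IntegrableOn (fun p ↦ f (x, p)) (t ×ˢ u) (ν.prod ρ) := by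
    rw [IntegrableOn, ← Measure.prod_restrict] at hf
    exact hf.prod_right_ae
  refine setIntegral_congr_ae hs (((ae_restrict_iff' hs).mp hslice).mono fun x hx hxs ↦ ?_)
  exact setIntegral_prod _ (hx hxs)

lemma integral_integral_swap_of_bounded {f : α → β → ℝ} {s : Set α} {t : Set β}
    {K : Set (α × β)} (hs : MeasurableSet s) (ht : MeasurableSet t) (hK : MeasurableSet K)
    (hKfin : μ.prod ν K ≠ ⊤) (hf : Measurable (Function.uncurry f)) {C : ℝ}
    (hC : ∀ x ∈ s, ∀ y ∈ t, (x, y) ∈ K → ‖f x y‖ ≤ C)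
    (hsupp : ∀ x ∈ s, ∀ y ∈ t, f x y ≠ 0 → (x, y) ∈ K) :
    ∫ x in s, ∫ y in t, f x y ∂ν ∂μ = ∫ y in t, ∫ x in s, f x y ∂μ ∂ν := by
  apply integral_integral_swap
  rw [Measure.prod_restrict]
  refine IntegrableOn.of_forall_sdiff_eq_zero (s := s ×ˢ t ∩ K) ?_ (hs.prod ht) ?_
  · refine Measure.integrableOn_of_bounded (M := C) ?_ hf.aestronglyMeasurable ?_
    · exact ne_top_of_le_ne_top hKfin (measure_mono inter_subset_right)
    · refine ae_restrict_of_forall_mem ((hs.prod ht).inter hK) fun p hp ↦ ?_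
      exact hC p.1 hp.1.1 p.2 hp.1.2 hp.2
  · rintro ⟨x, y⟩ ⟨⟨hx, hy⟩, hxy⟩
    by_contra h
    exact hxy ⟨⟨hx, hy⟩, hsupp x hx y hy h⟩

end Fubini

/-- The area of `{(u₁, u₂) | 1 < u₁, 1 < u₂, u₁ * u₂ < c}`. -/
def hyperbolaArea (c : ℝ) : ℝ := max c 1 * log (max c 1) - max c 1 + 1

lemma integral_Ioi_one_indicator_Ioi_mul_add (h : ℝ → ℝ) {a : ℝ} (ha : 0 < a) (b w : ℝ) :
    ∫ x in Ioi 1, (Ioi (a * x + b)).indicator h w = max ((w - b) / a - 1) 0 * h w := by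
  have hpt (x : ℝ) :
      (Ioi (a * x + b)).indicator h w = (Iio ((w - b) / a)).indicator (fun _ ↦ h w) x := by
    simp only [indicator_apply, mem_Ioi, mem_Iio, lt_div_iff₀ ha, lt_sub_iff_add_lt, mul_comm x]
  simp_rw [hpt, setIntegral_indicator measurableSet_Iio, Ioi_inter_Iio, setIntegral_const,
    smul_eq_mul, Real.volume_real_Ioo]

lemma integral_Ioi_one_max_div_sub_one (c : ℝ) :
    ∫ x in Ioi 1, max (c / x - 1) 0 = hyperbolaArea c := by
  rcases le_or_gt c 1 with hc | hc
  · have hzero : ∀ x ∈ Ioi (1 : ℝ), max (c / x - 1) 0 = 0 := fun x (hx : 1 < x) ↦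
      max_eq_right (by rw [sub_nonpos, div_le_one (by linarith)]; linarith)
    rw [setIntegral_congr_fun measurableSet_Ioi hzero, integral_zero, hyperbolaArea,
      max_eq_right hc]
    simp
  · have hind : ∀ x ∈ Ioi (1 : ℝ),
        max (c / x - 1) 0 = (Iio c).indicator (fun x ↦ c / x - 1) x := fun x (hx : 1 < x) ↦ by
      rcases lt_or_ge x c with hxc | hxc
      · rw [indicator_of_mem (show x ∈ Iio c from hxc),
          max_eq_left (by rw [sub_nonneg, le_div_iff₀ (by linarith)]; linarith)]
      · rw [indicator_of_notMem (show x ∉ Iio c from not_lt.mpr hxc),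
          max_eq_right (by rw [sub_nonpos, div_le_one (by linarith)]; linarith)]
    have hinv : IntervalIntegrable (fun x ↦ c / x) volume 1 c :=
      (continuousOn_const.div continuousOn_id fun x hx ↦ by
        rw [uIcc_of_le hc.le] at hx; exact (zero_lt_one.trans_le hx.1).ne').intervalIntegrable
    rw [setIntegral_congr_fun measurableSet_Ioi hind, setIntegral_indicator measurableSet_Iio,
      Ioi_inter_Iio, ← integral_Ioc_eq_integral_Ioo, ← intervalIntegral.integral_of_le hc.le,
      intervalIntegral.integral_sub hinv intervalIntegrable_const]
    simp_rw [div_eq_mul_inv c]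
    rw [intervalIntegral.integral_const_mul, integral_inv_of_pos one_pos (by linarith), div_one,
      intervalIntegral.integral_const, hyperbolaArea, max_eq_left hc.le, smul_eq_mul, mul_one]
    ring

section Pushforward

variable {H : ℝ → ℝ} {C W : ℝ}

lemma integral_Ioi_one_comp_const_add_eq_indicator {a : ℝ} (ha : 0 ≤ a) :
    ∫ u in Ioi 1, H (a + u) = ∫ w in Ioi 1, (Ioi (a + 1)).indicator H w := by
  rw [integral_Ioi_comp_const_add, setIntegral_indicator measurableSet_Ioi, Ioi_inter_Ioi,
    max_eq_right (by linarith)]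

lemma integral_Ioi_one_integral_Ioi_one_indicator (hH : Measurable H)
    (hC : ∀ w, ‖H w‖ ≤ C) (hW : ∀ w, 1 < w → H w ≠ 0 → w ≤ W) {u₁ : ℝ} (hu₁ : 1 < u₁) :
    ∫ u₂ in Ioi 1, ∫ w in Ioi 1, (Ioi (2 * u₁ * u₂ + 1)).indicator H w
      = ∫ w in Ioi 1, max ((w - 1) / 2 / u₁ - 1) 0 * H w := by
  rw [integral_integral_swap_of_bounded (f := fun u₂ w ↦ (Ioi (2 * u₁ * u₂ + 1)).indicator H w)
    (K := Icc 1 W ×ˢ Icc 1 W) measurableSet_Ioi measurableSet_Ioi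
    (measurableSet_Icc.prod measurableSet_Icc)
    (isCompact_Icc.prod isCompact_Icc).measure_lt_top.ne
    ((hH.comp measurable_snd).indicator (measurableSet_lt (by fun_prop) measurable_snd))
    (fun _ _ w _ _ ↦ (norm_indicator_le_norm_self _ w).trans (hC w)) ?_]
  · simp_rw [integral_Ioi_one_indicator_Ioi_mul_add H (by positivity : (0 : ℝ) < 2 * u₁),
      div_div]
  · intro u₂ (hu₂ : 1 < u₂) w hw hne
    obtain ⟨hlt : 2 * u₁ * u₂ + 1 < w, hHw⟩ := indicator_apply_ne_zero.mp hne
    have hwW := hW w hw hHw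
    exact ⟨⟨hu₂.le, by nlinarith⟩, ⟨le_of_lt hw, hwW⟩⟩

lemma integral_Ioi_one_iterated_comp_two_mul_mul_add (hH : Measurable H)
    (hC : ∀ w, ‖H w‖ ≤ C) (hW : ∀ w, 1 < w → H w ≠ 0 → w ≤ W) :
    ∫ u₁ in Ioi 1, ∫ u₂ in Ioi 1, ∫ u₃ in Ioi 1, H (2 * u₁ * u₂ + u₃)
      = ∫ w in Ioi 1, hyperbolaArea ((w - 1) / 2) * H w := by
  calc _ = ∫ u₁ in Ioi 1, ∫ u₂ in Ioi 1, ∫ w in Ioi 1, (Ioi (2 * u₁ * u₂ + 1)).indicator H w :=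
        setIntegral_congr_fun measurableSet_Ioi fun u₁ (hu₁ : 1 < u₁) ↦
          setIntegral_congr_fun measurableSet_Ioi fun u₂ (hu₂ : 1 < u₂) ↦
            integral_Ioi_one_comp_const_add_eq_indicator (by positivity)
    _ = ∫ u₁ in Ioi 1, ∫ w in Ioi 1, max ((w - 1) / 2 / u₁ - 1) 0 * H w :=
        setIntegral_congr_fun measurableSet_Ioi fun u₁ hu₁ ↦
          integral_Ioi_one_integral_Ioi_one_indicator hH hC hW hu₁
    _ = ∫ w in Ioi 1, ∫ u₁ in Ioi 1, max ((w - 1) / 2 / u₁ - 1) 0 * H w := by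
        refine integral_integral_swap_of_bounded (K := Icc 1 W ×ˢ Icc 1 W) (C := W * C)
          measurableSet_Ioi measurableSet_Ioi (measurableSet_Icc.prod measurableSet_Icc)
          (isCompact_Icc.prod isCompact_Icc).measure_lt_top.ne (by fun_prop) ?_ ?_
        · rintro u₁ (hu₁ : 1 < u₁) w - ⟨-, hw, hwW⟩
          have hmax : max ((w - 1) / 2 / u₁ - 1) 0 ≤ W := max_le (by
            have := div_le_self (by linarith : 0 ≤ (w - 1) / 2) hu₁.le
            linarith) (by linarith)
          rw [norm_mul, Real.norm_of_nonneg (le_max_right _ _)]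
          exact mul_le_mul hmax (hC w) (norm_nonneg _) (by linarith)
        · intro u₁ (hu₁ : 1 < u₁) w hw hne
          obtain ⟨hmax, hHw⟩ := mul_ne_zero_iff.mp hne
          have hwW := hW w hw hHw
          have : 1 < (w - 1) / 2 / u₁ := by
            by_contra h
            exact hmax (max_eq_right (by linarith))
          rw [one_lt_div (by linarith)] at this
          exact ⟨⟨hu₁.le, by linarith⟩, ⟨le_of_lt hw, hwW⟩⟩
    _ = _ := by
        simp_rw [integral_mul_const, integral_Ioi_one_max_div_sub_one]

end Pushforward

def figureEightDensity (ℓ : ℝ) : ℝ :=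
  4 * sinh (ℓ / 2) * hyperbolaArea ((cosh (ℓ / 2) - 1) / 2)

lemma continuous_L8 : Continuous fun p : ℝ × ℝ × ℝ ↦ L8 p.1 p.2.1 p.2.2 :=
  continuous_const.mul <| Real.continuousOn_arcosh.comp_continuous (by fun_prop) fun p ↦
    mem_Ici.mpr <| by
      nlinarith [one_le_cosh (p.1 / 2), one_le_cosh (p.2.1 / 2), one_le_cosh (p.2.2 / 2)]

lemma le_L8 {x₁ x₂ x₃ : ℝ} (h₁ : 0 ≤ x₁) (h₂ : 0 ≤ x₂) (h₃ : 0 ≤ x₃) :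
    x₁ ≤ L8 x₁ x₂ x₃ ∧ x₂ ≤ L8 x₁ x₂ x₃ ∧ x₃ ≤ L8 x₁ x₂ x₃ := by
  have c₁ := one_le_cosh (x₁ / 2)
  have c₂ := one_le_cosh (x₂ / 2)
  have c₃ := one_le_cosh (x₃ / 2)
  exact ⟨le_two_mul_arcosh h₁ (by nlinarith), le_two_mul_arcosh h₂ (by nlinarith),
    le_two_mul_arcosh h₃ (by nlinarith)⟩

lemma integrableOn_comp_L8_mul_sinh {F : ℝ → ℝ} (hF : Continuous F) {M : ℝ}
    (hM : ∀ ℓ, F ℓ ≠ 0 → ℓ ≤ M) :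
    IntegrableOn (fun p : ℝ × ℝ × ℝ ↦ F (L8 p.1 p.2.1 p.2.2) *
        (sinh (p.1 / 2) * sinh (p.2.1 / 2) * sinh (p.2.2 / 2)))
      (Ioi 0 ×ˢ Ioi 0 ×ˢ Ioi 0) (volume.prod (volume.prod volume)) := by
  have hK : IsCompact (Icc 0 M ×ˢ Icc 0 M ×ˢ Icc (0 : ℝ) M) :=
    isCompact_Icc.prod (isCompact_Icc.prod isCompact_Icc)
  refine ((hF.comp continuous_L8).mul (by fun_prop)).continuousOn.integrableOn_compact hK
    |>.of_forall_sdiff_eq_zero (measurableSet_Ioi.prod (measurableSet_Ioi.prod measurableSet_Ioi))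
    fun ⟨x₁, x₂, x₃⟩ ⟨⟨h₁, h₂, h₃⟩, hK⟩ ↦ ?_
  by_contra hne
  have hL := hM _ (left_ne_zero_of_mul hne)
  obtain ⟨l₁, l₂, l₃⟩ := le_L8 (le_of_lt h₁) (le_of_lt h₂) (le_of_lt h₃)
  exact hK ⟨⟨le_of_lt h₁, l₁.trans hL⟩, ⟨le_of_lt h₂, l₂.trans hL⟩, ⟨le_of_lt h₃, l₃.trans hL⟩⟩

lemma setIntegral_orthant_comp_L8_mul_sinh {F : ℝ → ℝ} (hF : Continuous F)
    (hFc : HasCompactSupport F) :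
    ∫ p in Ioi 0 ×ˢ Ioi 0 ×ˢ Ioi 0, F (L8 p.1 p.2.1 p.2.2) *
        (sinh (p.1 / 2) * sinh (p.2.1 / 2) * sinh (p.2.2 / 2))
      = ∫ ℓ in Ioi 0, F ℓ * figureEightDensity ℓ := by
  obtain ⟨M, hM⟩ := hFc.isCompact.bddAbove
  have hFM : ∀ ℓ, F ℓ ≠ 0 → ℓ ≤ M := fun ℓ h ↦ hM (subset_tsupport F h)
  obtain ⟨C, hC⟩ := hF.bounded_above_of_compact_support hFc
  have hH : Measurable fun w ↦ F (2 * Real.arcosh w) :=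
    hF.measurable.comp (by unfold Real.arcosh; fun_prop)
  have hW : ∀ w, 1 < w → F (2 * Real.arcosh w) ≠ 0 → w ≤ cosh (M / 2) :=
    fun w hw h ↦ le_cosh_half_of_two_mul_arcosh_le hw.le (hFM _ h)
  calc _ = ∫ x₁ in Ioi 0, ∫ x₂ in Ioi 0, ∫ x₃ in Ioi 0, F (L8 x₁ x₂ x₃) *
        (sinh (x₁ / 2) * sinh (x₂ / 2) * sinh (x₃ / 2)) :=
        setIntegral_prod_prod measurableSet_Ioi (integrableOn_comp_L8_mul_sinh hF hFM)
    _ = 8 * ∫ u₁ in Ioi 1, ∫ u₂ in Ioi 1, ∫ u₃ in Ioi 1,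
          F (2 * Real.arcosh (2 * u₁ * u₂ + u₃)) :=
        integral_Ioi_iterated_comp_cosh_half fun u₁ u₂ u₃ ↦
          F (2 * Real.arcosh (2 * u₁ * u₂ + u₃))
    _ = 4 * ∫ ℓ in Ioi 0, hyperbolaArea ((cosh (ℓ / 2) - 1) / 2) *
          F (2 * Real.arcosh (cosh (ℓ / 2))) * sinh (ℓ / 2) := by
        rw [integral_Ioi_one_iterated_comp_two_mul_mul_add hH (fun w ↦ hC _) hW,
          integral_Ioi_comp_cosh_half_mul_sinh_half
            fun w ↦ hyperbolaArea ((w - 1) / 2) * F (2 * Real.arcosh w)]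
        ring
    _ = _ := by
        rw [← integral_const_mul]
        refine setIntegral_congr_fun measurableSet_Ioi fun ℓ hℓ ↦ ?_
        rw [two_mul_arcosh_cosh_half (le_of_lt hℓ), figureEightDensity]
        ring

def figureEightPoly : Polynomial ℝ :=
  Polynomial.C (1 / 4) * (Polynomial.X - Polynomial.C (2 * log 4 + 2))

lemma abs_mul_log_sub_sub_mul_log_sub_le {a b x y : ℝ} (ha : 0 < a) (hx : x ∈ Icc a b)
    (hy : y ∈ Icc a b) :
    |(x * log x - x) - (y * log y - y)| ≤ max (-log a) (log b) * |x - y| := by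
  have hderiv : ∀ z ∈ Icc a b, HasDerivWithinAt (fun z ↦ z * log z - z) (log z) (Icc a b) z :=
    fun z hz ↦ by
      have h := (hasDerivAt_mul_log (ha.trans_le hz.1).ne').sub (hasDerivAt_id' z)
      rw [add_sub_cancel_right] at h
      exact h.hasDerivWithinAt
  have hbound : ∀ z ∈ Icc a b, ‖log z‖ ≤ max (-log a) (log b) := fun z hz ↦ by
    rw [Real.norm_eq_abs, abs_le]
    constructor
    · linarith [le_max_left (-log a) (log b), log_le_log ha hz.1]
    · exact (log_le_log (ha.trans_le hz.1) hz.2).trans (le_max_right _ _)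
  exact (convex_Icc a b).norm_image_sub_le_of_norm_hasDerivWithin_le hderiv hbound hy hx

lemma hyperbolaArea_nonneg (c : ℝ) : 0 ≤ hyperbolaArea c := by
  have hm : 0 < max c 1 := zero_lt_one.trans_le (le_max_right c 1)
  have := mul_le_mul_of_nonneg_left (one_sub_inv_le_log_of_pos hm) hm.le
  rw [mul_sub, mul_one, mul_inv_cancel₀ hm.ne'] at this
  rw [hyperbolaArea]
  linarith

lemma hyperbolaArea_le_sq (c : ℝ) : hyperbolaArea c ≤ max c 1 ^ 2 := by
  have hm : 1 ≤ max c 1 := le_max_right c 1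
  have := mul_le_mul_of_nonneg_left (log_le_sub_one_of_pos (zero_lt_one.trans_le hm))
    (zero_le_one.trans hm)
  rw [hyperbolaArea]
  nlinarith

lemma abs_hyperbolaArea_sub_le {a b c x : ℝ} (ha : 0 < a) (hm : max c 1 ∈ Icc a b)
    (hx : x ∈ Icc a b) :
    |hyperbolaArea c - (x * log x - x)| ≤ max (-log a) (log b) * |max c 1 - x| + 1 := by
  have hsplit : hyperbolaArea c - (x * log x - x)
      = (max c 1 * log (max c 1) - max c 1) - (x * log x - x) + 1 := by
    rw [hyperbolaArea]; ring
  rw [hsplit]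
  refine (abs_add_le _ _).trans ?_
  rw [abs_one]
  exact add_le_add_left (abs_mul_log_sub_sub_mul_log_sub_le ha hm hx) 1

lemma figureEightDensity_sub_eq (ℓ : ℝ) :
    figureEightDensity ℓ - figureEightPoly.eval ℓ * exp ℓ
      = 2 * exp (ℓ / 2) * (hyperbolaArea ((cosh (ℓ / 2) - 1) / 2)
          - (exp (ℓ / 2) / 4 * log (exp (ℓ / 2) / 4) - exp (ℓ / 2) / 4))
        - 2 * exp (-(ℓ / 2)) * hyperbolaArea ((cosh (ℓ / 2) - 1) / 2) := by
  have hexp : exp ℓ = exp (ℓ / 2) ^ 2 := by rw [← exp_nat_mul]; ring_nf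
  rw [figureEightDensity, sinh_eq, log_div (exp_pos _).ne' four_ne_zero, log_exp, hexp,
    figureEightPoly]
  simp only [Polynomial.eval_mul, Polynomial.eval_C, Polynomial.eval_sub, Polynomial.eval_X]
  ring

lemma abs_figureEightDensity_sub_le {ℓ : ℝ} (hℓ : 0 ≤ ℓ) :
    |figureEightDensity ℓ - figureEightPoly.eval ℓ * exp ℓ| ≤ 10 * (ℓ + 1) * exp (ℓ / 2) := by
  rw [figureEightDensity_sub_eq]
  set E := exp (ℓ / 2) with hE
  set t := exp (-(ℓ / 2)) with ht
  set c := (cosh (ℓ / 2) - 1) / 2 with hc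
  have hEt : E * t = 1 := by rw [hE, ht, ← exp_add, add_neg_cancel, exp_zero]
  have hE₁ : 1 ≤ E := one_le_exp (by linarith)
  have ht₀ : 0 < t := exp_pos _
  have hcE : c = (E + t - 2) / 4 := by rw [hc, cosh_eq]; ring
  have hm : max c 1 ∈ Icc (1 / 4) E :=
    ⟨by linarith [le_max_right c 1], max_le (by nlinarith) hE₁⟩
  have hdist : |max c 1 - E / 4| ≤ 1 := by
    have := max_le (by nlinarith : c ≤ E / 4 + 1) (by linarith : (1 : ℝ) ≤ E / 4 + 1)
    exact abs_le.mpr ⟨by linarith [le_max_left c 1], by linarith⟩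
  have hlog : max (-log (1 / 4)) (log E) ≤ ℓ / 2 + 3 := by
    refine max_le ?_ (by rw [hE, log_exp]; linarith)
    rw [one_div, log_inv, neg_neg]
    linarith [log_le_sub_one_of_pos (four_pos : (0 : ℝ) < 4)]
  have hdiff : |hyperbolaArea c - (E / 4 * log (E / 4) - E / 4)| ≤ ℓ / 2 + 4 := by
    have := abs_hyperbolaArea_sub_le (by norm_num) hm
      (⟨by linarith, by linarith⟩ : E / 4 ∈ Icc (1 / 4) E)
    linarith [mul_le_mul hlog hdist (abs_nonneg _) (by linarith)]
  have hA₀ := hyperbolaArea_nonneg c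
  have hA₁ : hyperbolaArea c ≤ E ^ 2 :=
    (hyperbolaArea_le_sq c).trans (pow_le_pow_left₀ (by linarith [hm.1]) hm.2 2)
  calc _ ≤ |2 * E * (hyperbolaArea c - (E / 4 * log (E / 4) - E / 4))|
          + |2 * t * hyperbolaArea c| := abs_sub _ _
    _ ≤ 2 * E * (ℓ / 2 + 4) + 2 * t * E ^ 2 := by
        rw [abs_mul (2 * E), abs_mul (2 * t), abs_of_pos (by linarith : 0 < 2 * E),
          abs_of_pos (by linarith : 0 < 2 * t), abs_of_nonneg hA₀]
        gcongr
    _ ≤ 10 * (ℓ + 1) * E := by nlinarith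

lemma memRwC_of_norm_le {r : ℝ → ℂ} (hr : ContinuousOn r (Ici 0)) {c K : ℝ} (hc : 0 ≤ c)
    (hK : 0 < K) (hbound : ∀ ℓ, 0 ≤ ℓ → ‖r ℓ‖ ≤ K * (ℓ + 1) ^ c * exp (ℓ / 2)) :
    memRwC c r := by
  refine ⟨hr, 2 * K, by positivity, fun n _ ↦ ?_⟩
  have hn : (0 : ℝ) ≤ n := n.cast_nonneg
  have hexp : ∫ s in (0 : ℝ)..n, exp (s / 2) = 2 * (exp (n / 2) - 1) := by
    rw [intervalIntegral.integral_comp_div exp two_ne_zero, integral_exp, zero_div, exp_zero,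
      smul_eq_mul]
  calc ∫ s in (0 : ℝ)..n, ‖r s‖
      ≤ ∫ s in (0 : ℝ)..n, K * ((n : ℝ) + 1) ^ c * exp (s / 2) := by
        refine intervalIntegral.integral_mono_on hn
          ((hr.mono Icc_subset_Ici_self).norm.intervalIntegrable_of_Icc hn)
          (Continuous.intervalIntegrable (by fun_prop) _ _)
          fun s hs ↦ (hbound s hs.1).trans ?_
        gcongr <;> linarith [hs.1, hs.2]
    _ = K * ((n : ℝ) + 1) ^ c * (2 * (exp (n / 2) - 1)) := by
        rw [intervalIntegral.integral_const_mul, hexp]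
    _ ≤ 2 * K * ((n : ℝ) + 1) ^ c * exp (n / 2) := by
        have : 0 ≤ K * ((n : ℝ) + 1) ^ c := by positivity
        nlinarith

lemma continuous_hyperbolaArea : Continuous hyperbolaArea := by
  have hmax : Continuous fun c : ℝ ↦ max c 1 := continuous_id.max continuous_const
  exact ((hmax.mul (hmax.log fun c ↦ (zero_lt_one.trans_le (le_max_right c 1)).ne')).sub
    hmax).add continuous_const

lemma continuous_figureEightDensity : Continuous figureEightDensity :=
  (by fun_prop : Continuous fun ℓ ↦ 4 * sinh (ℓ / 2)).mul
    (continuous_hyperbolaArea.comp (by fun_prop))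

/-- the pushforward under `𝔏₈` of the measure
`sinh(x₁/2)sinh(x₂/2)sinh(x₃/2) dx₁dx₂dx₃` on `(0,∞)³` admits a density which is a weak
Friedman–Ramanujan function. -/
theorem figure_eight_density_FR :
    ∃ (f : ℝ → ℝ) (p : Polynomial ℝ) (r : ℝ → ℝ),
      ContinuousOn f (Set.Ici 0) ∧
      memRw (fun ℓ : ℝ => (r ℓ : ℂ)) ∧
      (∀ ℓ : ℝ, 0 ≤ ℓ → f ℓ = p.eval ℓ * Real.exp ℓ + r ℓ) ∧
      ∀ F : ℝ → ℝ, Continuous F → HasCompactSupport F →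
        (∫ p in {p : ℝ × ℝ × ℝ | 0 < p.1 ∧ 0 < p.2.1 ∧ 0 < p.2.2},
            F (L8 p.1 p.2.1 p.2.2) *
              (Real.sinh (p.1 / 2) * Real.sinh (p.2.1 / 2) * Real.sinh (p.2.2 / 2)))
          = ∫ ℓ in Set.Ioi (0:ℝ), F ℓ * f ℓ := by
  have hr : Continuous fun ℓ ↦ figureEightDensity ℓ - figureEightPoly.eval ℓ * exp ℓ :=
    continuous_figureEightDensity.sub (figureEightPoly.continuous.mul continuous_exp)
  refine ⟨figureEightDensity, figureEightPoly,
    fun ℓ ↦ figureEightDensity ℓ - figureEightPoly.eval ℓ * exp ℓ,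
    continuous_figureEightDensity.continuousOn, ⟨1, zero_le_one, ?_⟩, fun ℓ _ ↦ by ring,
    fun F hF hFc ↦ setIntegral_orthant_comp_L8_mul_sinh hF hFc⟩
  refine memRwC_of_norm_le (Complex.continuous_ofReal.comp hr).continuousOn zero_le_one
    (by norm_num : (0 : ℝ) < 10) fun ℓ hℓ ↦ ?_
  rw [Function.comp_apply, Complex.norm_real, Real.norm_eq_abs, rpow_one]
  exact abs_figureEightDensity_sub_le hℓ
end
end
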